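/- arXiv:2504.18947 — 7 statements merged into one kernel-verified Lean document; each statement's English description precedes it below -/
import Mathlib

section
/- Let Y be a subspace of X. Then Y has property-SNP if and only if for every f ∈ Y* there exists ν ∈ 𝒫 with χ_ν^Y(f) < ∞ such that for all ρ, μ ∈ 𝒫_ν and every x ∈ X \ Y, one has sup_{v∈Y}[f(v) − χ_ρ^Y(f)·ρ(v+x)] = inf_{w∈Y}[−f(w) + χ_μ^Y(f)·μ(w−x)]. -/
open scoped ENNReal

noncomputable section

/-- `χ_ρ(g) = sup { |g v| : ρ v ≤ 1 } ∈ [0,∞]`. -/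
def chi {V : Type*} [AddCommGroup V] [Module ℝ V] [TopologicalSpace V]
    (ρ : V → ℝ) (g : V →L[ℝ] ℝ) : ℝ≥0∞ :=
  ⨆ v ∈ {v : V | ρ v ≤ 1}, ENNReal.ofReal |g v|

/-- `χ_ρ^W(f)` for a functional `f` on a subspace `W`. -/
def chiSub {V : Type*} [AddCommGroup V] [Module ℝ V] [TopologicalSpace V]
    (W : Submodule ℝ V) (ρ : V → ℝ) (f : W →L[ℝ] ℝ) : ℝ≥0∞ :=
  chi (fun w : W => ρ (w : V)) f

/-- `ft` is a Hahn-Banach extension of the pair `(f, ρ)` on the subspace `W`. -/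
def IsHBE {V : Type*} [AddCommGroup V] [Module ℝ V] [TopologicalSpace V]
    (W : Submodule ℝ V) (ρ : V → ℝ) (f : W →L[ℝ] ℝ) (ft : V →L[ℝ] ℝ) : Prop :=
  ft.comp W.subtypeL = f ∧ chi ρ ft = chiSub W ρ f

/-- Property-SNP of a subspace `W` with respect to the family `p` of seminorms. -/
def SNP {V : Type*} [AddCommGroup V] [Module ℝ V] [TopologicalSpace V]
    {ι : Type*} (p : ι → V → ℝ) (W : Submodule ℝ V) : Prop :=
  ∀ f : W →L[ℝ] ℝ, ∃ i, chiSub W (p i) f < ⊤ ∧ ∃ ft : V →L[ℝ] ℝ,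
    ∀ j, (∀ v, p i v ≤ p j v) →
      IsHBE W (p j) f ft ∧ ∀ g : V →L[ℝ] ℝ, IsHBE W (p j) f g → g = ft

open scoped NNReal
section Helpers

variable {V : Type*} [AddCommGroup V] [Module ℝ V] [TopologicalSpace V]

theorem chi_ge (ρ : V → ℝ) (g : V →L[ℝ] ℝ) {v : V} (hv : ρ v ≤ 1) :
    ENNReal.ofReal |g v| ≤ chi ρ g :=
  le_iSup₂ (f := fun v (_ : v ∈ {v : V | ρ v ≤ 1}) => ENNReal.ofReal |g v|) v hv

theorem abs_le_of_chi_ne_top (ρ : Seminorm ℝ V) (g : V →L[ℝ] ℝ)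
    (h : chi ⇑ρ g ≠ ⊤) (z : V) : |g z| ≤ (chi ⇑ρ g).toReal * ρ z := by
  set c := (chi ⇑ρ g).toReal with hc
  have key : ∀ v : V, ρ v ≤ 1 → |g v| ≤ c := by
    intro v hv
    have := chi_ge ρ g hv
    rwa [ENNReal.ofReal_le_iff_le_toReal h] at this
  rcases eq_or_lt_of_le (apply_nonneg ρ z) with hz | hz
  · have hz' : ∀ n : ℕ, (n : ℝ) * |g z| ≤ c := by
      intro n
      have h1 : ρ ((n : ℝ) • z) ≤ 1 := by
        rw [map_smul_eq_mul, ← hz]; simp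
      have := key _ h1
      rwa [map_smul, smul_eq_mul, abs_mul, abs_of_nonneg (by positivity : (0:ℝ) ≤ (n:ℝ))] at this
    have hgz : |g z| = 0 := by
      by_contra h0
      have h0' : 0 < |g z| := lt_of_le_of_ne (abs_nonneg _) (Ne.symm h0)
      obtain ⟨n, hn⟩ := exists_nat_gt (c / |g z|)
      have := hz' n
      have : c / |g z| ≥ (n : ℝ) := by
        rw [ge_iff_le, le_div_iff₀ h0']; exact this
      linarith
    have hc0 : 0 ≤ c := ENNReal.toReal_nonneg
    nlinarith [abs_nonneg (g z)]
  · have h1 : ρ ((ρ z)⁻¹ • z) ≤ 1 := by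
      rw [map_smul_eq_mul, Real.norm_eq_abs, abs_of_nonneg (by positivity),
        inv_mul_cancel₀ (ne_of_gt hz)]
    have := key _ h1
    rw [map_smul, smul_eq_mul, abs_mul, abs_of_nonneg (by positivity : (0:ℝ) ≤ (ρ z)⁻¹)] at this
    calc |g z| = ρ z * ((ρ z)⁻¹ * |g z|) := by field_simp
    _ ≤ ρ z * c := by nlinarith [apply_nonneg ρ z]
    _ = c * ρ z := mul_comm _ _

theorem chi_le (ρ : Seminorm ℝ V) (g : V →L[ℝ] ℝ) (c : ℝ) (hc : 0 ≤ c)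
    (h : ∀ z, |g z| ≤ c * ρ z) : chi ⇑ρ g ≤ ENNReal.ofReal c := by
  refine iSup₂_le fun v hv => ENNReal.ofReal_le_ofReal ?_
  exact (h v).trans (mul_le_of_le_one_right hc hv)


variable {X : Type*} [AddCommGroup X] [Module ℝ X] [TopologicalSpace X]
  {ι : Type*} [Nonempty ι]

-- coercion compatibility: chiSub as chi on the subspace with the composed seminorm
theorem chiSub_eq_chi (Y : Submodule ℝ X) (ρ : Seminorm ℝ X) (f : Y →L[ℝ] ℝ) :
    chiSub Y ⇑ρ f = chi ⇑(ρ.comp Y.subtype) f := rfl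

theorem chiSub_anti (Y : Submodule ℝ X) (ρ ρ' : Seminorm ℝ X) (f : Y →L[ℝ] ℝ)
    (h : ρ ≤ ρ') : chiSub Y ⇑ρ' f ≤ chiSub Y ⇑ρ f := by
  refine iSup₂_le fun w hw => ?_
  exact le_iSup₂ (f := fun w (_ : w ∈ {w : Y | ρ (w:X) ≤ 1}) => ENNReal.ofReal |f w|) w
    ((h (w:X)).trans hw)

theorem chiSub_le_chi (Y : Submodule ℝ X) (ρ : X → ℝ) (f : Y →L[ℝ] ℝ) (g : X →L[ℝ] ℝ)
    (hg : g.comp Y.subtypeL = f) : chiSub Y ρ f ≤ chi ρ g := by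
  refine iSup₂_le fun w hw => ?_
  have : f w = g (w : X) := by rw [← hg]; rfl
  rw [this]
  exact le_iSup₂ (f := fun v (_ : v ∈ {v : X | ρ v ≤ 1}) => ENNReal.ofReal |g v|) (w:X) hw

/-- continuity of a bounded linear functional -/
theorem cont_of_bound (p : SeminormFamily ℝ X ι) (hp : WithSeminorms p)
    (g : X →ₗ[ℝ] ℝ) (i : ι) (c : ℝ) (hc : 0 ≤ c) (h : ∀ z, |g z| ≤ c * p i z) :
    Continuous g := by
  refine Seminorm.cont_withSeminorms_normedSpace ℝ hp g ⟨{i}, c.toNNReal, ?_⟩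
  rw [Finset.sup_singleton]
  intro z
  have h2 : (c.toNNReal • p i) z = c * p i z := by
    rw [Seminorm.smul_apply, NNReal.smul_def, smul_eq_mul, Real.coe_toNNReal c hc]
  show (normSeminorm ℝ ℝ).comp g z ≤ (c.toNNReal • p i) z
  rw [Seminorm.comp_apply, h2]
  simpa [Real.norm_eq_abs] using h z


theorem ext0 (p : SeminormFamily ℝ X ι) (hp : WithSeminorms p) (Y : Submodule ℝ X)
    (f : Y →L[ℝ] ℝ) (i : ι) (c : ℝ) (hc : 0 ≤ c)
    (hf : ∀ w : Y, |f w| ≤ c * p i (w : X)) :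
    ∃ g : X →L[ℝ] ℝ, g.comp Y.subtypeL = f ∧ ∀ z, |g z| ≤ c * p i z := by
  obtain ⟨g, hg1, hg2⟩ := exists_extension_of_le_sublinear ⟨Y, (f : Y →ₗ[ℝ] ℝ)⟩
    (fun z => c * p i z)
    (fun s hs z => by
      rw [map_smul_eq_mul, Real.norm_eq_abs, abs_of_pos hs]; ring)
    (fun z₁ z₂ => by
      have := map_add_le_add (p i) z₁ z₂; nlinarith)
    (fun w => (le_abs_self _).trans (hf w))
  have habs : ∀ z, |g z| ≤ c * p i z := by
    intro z
    refine abs_le.2 ⟨?_, hg2 z⟩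
    have := hg2 (-z)
    rw [map_neg, map_neg_eq_map] at this
    linarith
  exact ⟨⟨g, cont_of_bound p hp g i c hc habs⟩, ContinuousLinearMap.ext fun w => hg1 w, habs⟩


theorem ext_point (p : SeminormFamily ℝ X ι) (hp : WithSeminorms p) (Y : Submodule ℝ X)
    (f : Y →L[ℝ] ℝ) (i : ι) (c : ℝ) (hc : 0 ≤ c)
    (hf : ∀ w : Y, |f w| ≤ c * p i (w : X))
    (x : X) (hx : x ∉ Y) (t : ℝ)
    (hlow : ∀ v : Y, f v - c * p i ((v : X) + x) ≤ t)
    (hhigh : ∀ w : Y, t ≤ -f w + c * p i ((w : X) - x)) :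
    ∃ g : X →L[ℝ] ℝ, g.comp Y.subtypeL = f ∧ g (-x) = t ∧ ∀ z, |g z| ≤ c * p i z := by
  have hx' : -x ∉ (⟨Y, (f : Y →ₗ[ℝ] ℝ)⟩ : X →ₗ.[ℝ] ℝ).domain := by
    intro h
    exact hx (by simpa using Y.neg_mem h)
  set pm := LinearPMap.supSpanSingleton ⟨Y, (f : Y →ₗ[ℝ] ℝ)⟩ (-x) t hx' with hpm
  -- key bound on the one-dimensional extension
  have key : ∀ (y : X) (hy : y ∈ Y) (s : ℝ), f ⟨y, hy⟩ + s * t ≤ c * p i (y + s • (-x)) := by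
    intro y hy s
    rcases lt_trichotomy s 0 with hs | hs | hs
    · -- s < 0 : use hlow at (-s)⁻¹ • y
      set r : ℝ := -s with hr
      have hr0 : 0 < r := by simp [hr]; linarith
      have h1 := hlow ⟨r⁻¹ • y, Y.smul_mem _ hy⟩
      have h2 : f ⟨r⁻¹ • y, Y.smul_mem _ hy⟩ = r⁻¹ * f ⟨y, hy⟩ := by
        have : (⟨r⁻¹ • y, Y.smul_mem _ hy⟩ : Y) = r⁻¹ • ⟨y, hy⟩ := rfl
        rw [this, map_smul, smul_eq_mul]
      have h3 : p i ((r⁻¹ • y : X) + x) = r⁻¹ * p i (y + r • x) := by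
        have : (r⁻¹ • y : X) + x = r⁻¹ • (y + r • x) := by
          rw [smul_add, smul_smul, inv_mul_cancel₀ (ne_of_gt hr0), one_smul]
        rw [this, map_smul_eq_mul, Real.norm_eq_abs, abs_of_pos (by positivity)]
      have h4 : y + s • (-x) = y + r • x := by
        rw [hr]; module
      rw [h2, h3] at h1
      rw [h4]
      have hrt : s * t = -(r * t) := by rw [hr]; ring
      have h5 := mul_le_mul_of_nonneg_left h1 (le_of_lt hr0)
      have e1 : r * (r⁻¹ * f ⟨y, hy⟩) = f ⟨y, hy⟩ := by field_simp
      have e2 : r * (c * (r⁻¹ * p i (y + r • x))) = c * p i (y + r • x) := by field_simp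
      rw [mul_sub, e1, e2] at h5
      linarith
    · simp only [hs, zero_mul, add_zero, zero_smul]
      exact (le_abs_self _).trans (hf ⟨y, hy⟩)
    · -- s > 0 : use hhigh at s⁻¹ • y
      have h1 := hhigh ⟨s⁻¹ • y, Y.smul_mem _ hy⟩
      have h2 : f ⟨s⁻¹ • y, Y.smul_mem _ hy⟩ = s⁻¹ * f ⟨y, hy⟩ := by
        have : (⟨s⁻¹ • y, Y.smul_mem _ hy⟩ : Y) = s⁻¹ • ⟨y, hy⟩ := rfl
        rw [this, map_smul, smul_eq_mul]
      have h3 : p i ((s⁻¹ • y : X) - x) = s⁻¹ * p i (y + s • (-x)) := by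
        have : (s⁻¹ • y : X) - x = s⁻¹ • (y + s • (-x)) := by
          rw [smul_add, smul_smul, inv_mul_cancel₀ (ne_of_gt hs)]
          module
        rw [this, map_smul_eq_mul, Real.norm_eq_abs, abs_of_pos (by positivity)]
      rw [h2, h3] at h1
      have h5 := mul_le_mul_of_nonneg_left h1 (le_of_lt hs)
      have e1 : s * (s⁻¹ * f ⟨y, hy⟩) = f ⟨y, hy⟩ := by field_simp
      have e2 : s * (c * (s⁻¹ * p i (y + s • (-x)))) = c * p i (y + s • (-x)) := by
        field_simp
      rw [mul_add, mul_neg, e1, e2] at h5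
      linarith
  have hdom : ∀ u : X, u ∈ pm.domain ↔ ∃ (y : X) (_ : y ∈ Y) (s : ℝ), u = y + s • (-x) := by
    intro u
    rw [hpm, LinearPMap.domain_supSpanSingleton, Submodule.mem_sup]
    constructor
    · rintro ⟨y, hy, z, hz, rfl⟩
      obtain ⟨s, rfl⟩ := Submodule.mem_span_singleton.1 hz
      exact ⟨y, hy, s, rfl⟩
    · rintro ⟨y, hy, s, rfl⟩
      exact ⟨y, hy, s • (-x), Submodule.mem_span_singleton.2 ⟨s, rfl⟩, rfl⟩
  have pm_apply : ∀ (y : X) (hy : y ∈ Y) (s : ℝ) (hu : y + s • (-x) ∈ pm.domain),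
      pm ⟨y + s • (-x), hu⟩ = f ⟨y, hy⟩ + s * t := by
    intro y hy s hu
    have h6 := LinearPMap.supSpanSingleton_apply_mk ⟨Y, (f : Y →ₗ[ℝ] ℝ)⟩ (-x) t hx' y hy s
    rw [smul_eq_mul] at h6
    exact h6
  obtain ⟨g, hg1, hg2⟩ := exists_extension_of_le_sublinear pm
    (fun z => c * p i z)
    (fun s hs z => by
      rw [map_smul_eq_mul, Real.norm_eq_abs, abs_of_pos hs]; ring)
    (fun z₁ z₂ => by
      have := map_add_le_add (p i) z₁ z₂; nlinarith)
    (by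
      rintro ⟨u, hu⟩
      obtain ⟨y, hy, s, rfl⟩ := (hdom u).1 hu
      rw [pm_apply y hy s hu]
      exact key y hy s)
  have habs : ∀ z, |g z| ≤ c * p i z := by
    intro z
    refine abs_le.2 ⟨?_, hg2 z⟩
    have := hg2 (-z)
    rw [map_neg, map_neg_eq_map] at this
    linarith
  have hres : ∀ w : Y, g w = f w := by
    intro w
    have hu : (w : X) + (0:ℝ) • (-x) ∈ pm.domain := (hdom _).2 ⟨w, w.2, 0, rfl⟩
    have h1 := hg1 ⟨(w : X) + (0:ℝ) • (-x), hu⟩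
    rw [pm_apply (w : X) w.2 0 hu] at h1
    simpa using h1
  have hval : g (-x) = t := by
    have hu : (0:X) + (1:ℝ) • (-x) ∈ pm.domain := (hdom _).2 ⟨0, Y.zero_mem, 1, rfl⟩
    have h1 := hg1 ⟨(0:X) + (1:ℝ) • (-x), hu⟩
    rw [pm_apply 0 Y.zero_mem 1 hu] at h1
    have hz : (⟨(0:X), Y.zero_mem⟩ : Y) = 0 := rfl
    simpa [hz] using h1
  exact ⟨⟨g, cont_of_bound p hp g i c hc habs⟩, ContinuousLinearMap.ext fun w => hres w,
    hval, habs⟩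


theorem int_low (Y : Submodule ℝ X) (f : Y →L[ℝ] ℝ) (g : X →L[ℝ] ℝ)
    (hres : g.comp Y.subtypeL = f) (ρ : Seminorm ℝ X) (c : ℝ)
    (hbd : ∀ z, |g z| ≤ c * ρ z) (x : X) (v : Y) :
    f v - c * ρ ((v : X) + x) ≤ g (-x) := by
  have hfv : f v = g (v : X) := by rw [← hres]; rfl
  have h1 := (abs_le.1 (hbd (-x - (v : X)))).1
  have h2 : g (-x - (v : X)) = g (-x) - g (v : X) := map_sub g _ _
  have h3 : ρ (-x - (v : X)) = ρ ((v : X) + x) := by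
    rw [show -x - (v : X) = -((v : X) + x) by abel, map_neg_eq_map]
  rw [h2, h3] at h1
  linarith [hfv ▸ h1]

theorem int_high (Y : Submodule ℝ X) (f : Y →L[ℝ] ℝ) (g : X →L[ℝ] ℝ)
    (hres : g.comp Y.subtypeL = f) (ρ : Seminorm ℝ X) (c : ℝ)
    (hbd : ∀ z, |g z| ≤ c * ρ z) (x : X) (w : Y) :
    g (-x) ≤ -f w + c * ρ ((w : X) - x) := by
  have hfw : f w = g (w : X) := by rw [← hres]; rfl
  have h1 := (abs_le.1 (hbd ((w : X) - x))).2
  have h2 : g ((w : X) - x) = g (w : X) + g (-x) := by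
    rw [show (w : X) - x = (w : X) + (-x) by abel, map_add]
  rw [h2] at h1
  linarith [hfw ▸ h1]

theorem pair_le (Y : Submodule ℝ X) (f : Y →L[ℝ] ℝ) (ρ : Seminorm ℝ X) (c : ℝ) (hc : 0 ≤ c)
    (hf : ∀ u : Y, |f u| ≤ c * ρ (u : X)) (x : X) (v w : Y) :
    f v - c * ρ ((v : X) + x) ≤ -f w + c * ρ ((w : X) - x) := by
  have h1 : f v + f w = f (v + w) := (map_add f v w).symm
  have h2 := (le_abs_self _).trans (hf (v + w))
  have hco : ((v + w : Y) : X) = (v : X) + (w : X) := rfl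
  rw [hco] at h2
  have h3 : ρ ((v : X) + (w : X)) ≤ ρ ((v : X) + x) + ρ ((w : X) - x) := by
    rw [show (v : X) + (w : X) = ((v : X) + x) + ((w : X) - x) by abel]
    exact map_add_le_add ρ _ _
  have h4 := mul_le_mul_of_nonneg_left h3 hc
  rw [mul_add] at h4
  linarith [h1 ▸ h2]

theorem sub_bound (Y : Submodule ℝ X) (f : Y →L[ℝ] ℝ) (ρ : Seminorm ℝ X)
    (h : chiSub Y ⇑ρ f ≠ ⊤) (w : Y) :
    |f w| ≤ (chiSub Y ⇑ρ f).toReal * ρ (w : X) := by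
  have h' : chi ⇑(ρ.comp Y.subtype) f ≠ ⊤ := by rw [← chiSub_eq_chi]; exact h
  have := abs_le_of_chi_ne_top (ρ.comp Y.subtype) f h' w
  rw [← chiSub_eq_chi] at this
  simpa [Seminorm.comp_apply] using this

end Helpers

theorem statement1 {X : Type*} [AddCommGroup X] [Module ℝ X] [TopologicalSpace X]
    {ι : Type*} [Nonempty ι] (p : SeminormFamily ℝ X ι) (hp : WithSeminorms p)
    (hdir : Directed (· ≤ ·) p) (Y : Submodule ℝ X) :
    SNP (fun i => ⇑(p i)) Y ↔
      ∀ f : Y →L[ℝ] ℝ, ∃ k : ι, chiSub Y (⇑(p k)) f < ⊤ ∧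
        ∀ i j : ι, p k ≤ p i → p k ≤ p j → ∀ x : X, x ∉ Y →
          (⨆ v : Y, (f v - (chiSub Y (⇑(p i)) f).toReal * p i ((v : X) + x))) =
            (⨅ w : Y, (-(f w) + (chiSub Y (⇑(p j)) f).toReal * p j ((w : X) - x))) := by
  haveI : ∀ (Z : Submodule ℝ X), Nonempty Z := fun Z => ⟨0⟩
  constructor
  · -- forward
    intro hsnp f
    obtain ⟨k, hk, ft, hft⟩ := hsnp f
    refine ⟨k, hk, ?_⟩
    intro i j hki hkj x hx
    obtain ⟨hbe_i, huniq_i⟩ := hft i (fun v => hki v)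
    obtain ⟨hbe_j, huniq_j⟩ := hft j (fun v => hkj v)
    have hfin_i : chiSub Y ⇑(p i) f ≠ ⊤ :=
      ((chiSub_anti Y (p k) (p i) f hki).trans_lt hk).ne
    have hfin_j : chiSub Y ⇑(p j) f ≠ ⊤ :=
      ((chiSub_anti Y (p k) (p j) f hkj).trans_lt hk).ne
    set ci := (chiSub Y ⇑(p i) f).toReal with hci
    set cj := (chiSub Y ⇑(p j) f).toReal with hcj
    have hci0 : 0 ≤ ci := ENNReal.toReal_nonneg
    have hcj0 : 0 ≤ cj := ENNReal.toReal_nonneg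
    have hf_i : ∀ w : Y, |f w| ≤ ci * p i (w : X) := fun w => sub_bound Y f (p i) hfin_i w
    have hf_j : ∀ w : Y, |f w| ≤ cj * p j (w : X) := fun w => sub_bound Y f (p j) hfin_j w
    have hbd_i : ∀ z, |ft z| ≤ ci * p i z := by
      intro z
      have h1 : chi ⇑(p i) ft ≠ ⊤ := by rw [hbe_i.2]; exact hfin_i
      have := abs_le_of_chi_ne_top (p i) ft h1 z
      rwa [hbe_i.2, ← hci] at this
    have hbd_j : ∀ z, |ft z| ≤ cj * p j z := by
      intro z
      have h1 : chi ⇑(p j) ft ≠ ⊤ := by rw [hbe_j.2]; exact hfin_j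
      have := abs_le_of_chi_ne_top (p j) ft h1 z
      rwa [hbe_j.2, ← hcj] at this
    have hBA : BddAbove (Set.range fun v : Y => f v - ci * p i ((v : X) + x)) := by
      refine ⟨-f 0 + ci * p i (((0 : Y) : X) - x), ?_⟩
      rintro r ⟨v, rfl⟩
      exact pair_le Y f (p i) ci hci0 hf_i x v 0
    have hBB : BddBelow (Set.range fun w : Y => -f w + cj * p j ((w : X) - x)) := by
      refine ⟨f 0 - cj * p j (((0 : Y) : X) + x), ?_⟩
      rintro r ⟨w, rfl⟩
      exact pair_le Y f (p j) cj hcj0 hf_j x 0 w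
    have hS_le : (⨆ v : Y, (f v - ci * p i ((v : X) + x))) ≤ ft (-x) :=
      ciSup_le fun v => int_low Y f ft hbe_i.1 (p i) ci hbd_i x v
    have hI_ge : ft (-x) ≤ (⨅ w : Y, (-(f w) + cj * p j ((w : X) - x))) :=
      le_ciInf fun w => int_high Y f ft hbe_j.1 (p j) cj hbd_j x w
    have hS_ge : ft (-x) ≤ (⨆ v : Y, (f v - ci * p i ((v : X) + x))) := by
      by_contra hlt
      push_neg at hlt
      obtain ⟨g, hg1, hg2, hg3⟩ := ext_point p hp Y f i ci hci0 hf_i x hx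
        (⨆ v : Y, (f v - ci * p i ((v : X) + x)))
        (fun v => le_ciSup hBA v)
        (fun w => ciSup_le fun v => pair_le Y f (p i) ci hci0 hf_i x v w)
      have hbe : IsHBE Y ⇑(p i) f g := by
        refine ⟨hg1, le_antisymm ?_ (chiSub_le_chi Y ⇑(p i) f g hg1)⟩
        exact (chi_le (p i) g ci hci0 hg3).trans_eq (by rw [hci, ENNReal.ofReal_toReal hfin_i])
      have heq := huniq_i g hbe
      rw [heq] at hg2
      exact absurd hg2 (ne_of_gt hlt)
    have hI_le : (⨅ w : Y, (-(f w) + cj * p j ((w : X) - x))) ≤ ft (-x) := by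
      by_contra hlt
      push_neg at hlt
      obtain ⟨g, hg1, hg2, hg3⟩ := ext_point p hp Y f j cj hcj0 hf_j x hx
        (⨅ w : Y, (-(f w) + cj * p j ((w : X) - x)))
        (fun v => le_ciInf fun w => pair_le Y f (p j) cj hcj0 hf_j x v w)
        (fun w => ciInf_le hBB w)
      have hbe : IsHBE Y ⇑(p j) f g := by
        refine ⟨hg1, le_antisymm ?_ (chiSub_le_chi Y ⇑(p j) f g hg1)⟩
        exact (chi_le (p j) g cj hcj0 hg3).trans_eq (by rw [hcj, ENNReal.ofReal_toReal hfin_j])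
      have heq := huniq_j g hbe
      rw [heq] at hg2
      exact absurd hg2 (ne_of_lt hlt)
    exact le_antisymm (hS_le.trans hI_ge) (hI_le.trans hS_ge)
  · -- backward
    intro h f
    obtain ⟨k, hklt, heqs⟩ := h f
    have hk' : chiSub Y ⇑(p k) f ≠ ⊤ := hklt.ne
    set ck := (chiSub Y ⇑(p k) f).toReal with hck
    have hck0 : 0 ≤ ck := ENNReal.toReal_nonneg
    have hf_k : ∀ w : Y, |f w| ≤ ck * p k (w : X) := fun w => sub_bound Y f (p k) hk' w
    obtain ⟨ft, hft1, hft2⟩ := ext0 p hp Y f k ck hck0 hf_k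
    refine ⟨k, hklt, ft, ?_⟩
    intro j hkj'
    have hkj : p k ≤ p j := fun v => hkj' v
    have hjfin : chiSub Y ⇑(p j) f ≠ ⊤ :=
      ((chiSub_anti Y (p k) (p j) f hkj).trans_lt hklt).ne
    set cj := (chiSub Y ⇑(p j) f).toReal with hcj
    have hcj0 : 0 ≤ cj := ENNReal.toReal_nonneg
    have hf_j : ∀ w : Y, |f w| ≤ cj * p j (w : X) := fun w => sub_bound Y f (p j) hjfin w
    have hBA : ∀ x : X, BddAbove (Set.range fun v : Y => f v - cj * p j ((v : X) + x)) := by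
      intro x
      refine ⟨-f 0 + cj * p j (((0 : Y) : X) - x), ?_⟩
      rintro r ⟨v, rfl⟩
      exact pair_le Y f (p j) cj hcj0 hf_j x v 0
    have hBB : ∀ x : X, BddBelow (Set.range fun w : Y => -f w + cj * p j ((w : X) - x)) := by
      intro x
      refine ⟨f 0 - cj * p j (((0 : Y) : X) + x), ?_⟩
      rintro r ⟨w, rfl⟩
      exact pair_le Y f (p j) cj hcj0 hf_j x 0 w
    have key : ∀ x : X, x ∉ Y →
        (⨆ v : Y, (f v - cj * p j ((v : X) + x))) = ft (-x) ∧
        (⨅ w : Y, (-(f w) + cj * p j ((w : X) - x))) = ft (-x) := by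
      intro x hx
      have h1 : (⨆ v : Y, (f v - ck * p k ((v : X) + x))) ≤ ft (-x) :=
        ciSup_le fun v => int_low Y f ft hft1 (p k) ck hft2 x v
      have h2 : ft (-x) ≤ (⨅ w : Y, (-(f w) + ck * p k ((w : X) - x))) :=
        le_ciInf fun w => int_high Y f ft hft1 (p k) ck hft2 x w
      have e1 := heqs j k hkj le_rfl x hx
      have e2 := heqs k j le_rfl hkj x hx
      have e3 : (⨆ v : Y, (f v - cj * p j ((v : X) + x))) ≤
          (⨅ w : Y, (-(f w) + cj * p j ((w : X) - x))) :=
        ciSup_le fun v => le_ciInf fun w => pair_le Y f (p j) cj hcj0 hf_j x v w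
      constructor <;> linarith
    have hbd_j : ∀ z, |ft z| ≤ cj * p j z := by
      intro z
      by_cases hz : z ∈ Y
      · have hfz : ft z = f ⟨z, hz⟩ := by rw [← hft1]; rfl
        rw [hfz]
        exact hf_j ⟨z, hz⟩
      · have hz' : -z ∉ Y := fun hmem => hz (by simpa using Y.neg_mem hmem)
        obtain ⟨e1, e2⟩ := key (-z) hz'
        rw [neg_neg] at e1 e2
        have l1 : f 0 - cj * p j (((0 : Y) : X) + (-z)) ≤
            (⨆ v : Y, (f v - cj * p j ((v : X) + (-z)))) := le_ciSup (hBA (-z)) 0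
        have l2 : (⨅ w : Y, (-(f w) + cj * p j ((w : X) - (-z)))) ≤
            -f 0 + cj * p j (((0 : Y) : X) - (-z)) := ciInf_le (hBB (-z)) 0
        rw [e1] at l1
        rw [e2] at l2
        have s1 : p j (((0 : Y) : X) + (-z)) = p j z := by
          rw [show ((0 : Y) : X) + (-z) = -z by simp, map_neg_eq_map]
        have s2 : p j (((0 : Y) : X) - (-z)) = p j z := by
          rw [show ((0 : Y) : X) - (-z) = z by simp]
        rw [s1, map_zero] at l1
        rw [s2, map_zero] at l2
        refine abs_le.2 ⟨by linarith, by linarith⟩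
    constructor
    · refine ⟨hft1, le_antisymm ?_ (chiSub_le_chi Y ⇑(p j) f ft hft1)⟩
      exact (chi_le (p j) ft cj hcj0 hbd_j).trans_eq (by rw [hcj, ENNReal.ofReal_toReal hjfin])
    · intro g hg
      have hbd_g : ∀ z, |g z| ≤ cj * p j z := by
        intro z
        have h1 : chi ⇑(p j) g ≠ ⊤ := by rw [hg.2]; exact hjfin
        have := abs_le_of_chi_ne_top (p j) g h1 z
        rwa [hg.2, ← hcj] at this
      refine ContinuousLinearMap.ext fun z => ?_
      by_cases hz : z ∈ Y
      · have h1 : g z = f ⟨z, hz⟩ := by rw [← hg.1]; rfl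
        have h2 : ft z = f ⟨z, hz⟩ := by rw [← hft1]; rfl
        rw [h1, h2]
      · have hz' : -z ∉ Y := fun hmem => hz (by simpa using Y.neg_mem hmem)
        obtain ⟨e1, e2⟩ := key (-z) hz'
        rw [neg_neg] at e1 e2
        have l1 : (⨆ v : Y, (f v - cj * p j ((v : X) + (-z)))) ≤ g z := by
          have := ciSup_le fun v => int_low Y f g hg.1 (p j) cj hbd_g (-z) v
          rwa [neg_neg] at this
        have l2 : g z ≤ (⨅ w : Y, (-(f w) + cj * p j ((w : X) - (-z)))) := by
          have := le_ciInf fun w => int_high Y f g hg.1 (p j) cj hbd_g (-z) w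
          rwa [neg_neg] at this
        rw [e1] at l1
        rw [e2] at l2
        linarith
end
end

section
/- Let Y be a subspace of X, let h ∈ X* and ρ ∈ 𝒫 be such that d_{χ_ρ}(h, Y^⊥) < ∞. Then there exists g ∈ Y^⊥ such that χ_ρ^X(h − g) = d_{χ_ρ}(h, Y^⊥); that is, the annihilator Y^⊥ is proximinal in X* with respect to the extended seminorm χ_ρ^X. -/
open scoped ENNReal

noncomputable section

/-- The annihilator `W^⊥ = {g ∈ V* : g|_W = 0}`. -/
def ann {V : Type*} [AddCommGroup V] [Module ℝ V] [TopologicalSpace V]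
    (W : Submodule ℝ V) : Set (V →L[ℝ] ℝ) :=
  {g | ∀ y ∈ W, g y = 0}

/-- `d_{χ_ρ}(f, S) = inf {χ_ρ(f - s) : s ∈ S}`. -/
def distChi {V : Type*} [AddCommGroup V] [Module ℝ V] [TopologicalSpace V]
    (ρ : V → ℝ) (f : V →L[ℝ] ℝ) (S : Set (V →L[ℝ] ℝ)) : ℝ≥0∞ :=
  ⨅ s ∈ S, chi ρ (f - s)

theorem statement2 {X : Type*} [AddCommGroup X] [Module ℝ X] [TopologicalSpace X]
    {ι : Type*} [Nonempty ι] (p : SeminormFamily ℝ X ι) (hp : WithSeminorms p)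
    (hdir : Directed (· ≤ ·) p) (Y : Submodule ℝ X)
    (h : X →L[ℝ] ℝ) (i : ι) (hfin : distChi (⇑(p i)) h (ann Y) < ⊤) :
    ∃ g ∈ ann Y, chi (⇑(p i)) (h - g) = distChi (⇑(p i)) h (ann Y) := by
  set d : ℝ≥0∞ := distChi (⇑(p i)) h (ann Y) with hd
  set c : ℝ := d.toReal with hc
  have hc0 : 0 ≤ c := ENNReal.toReal_nonneg
  -- Step 1: for y ∈ Y with p i y ≤ 1, ofReal |h y| ≤ d
  have key : ∀ y ∈ Y, p i y ≤ 1 → ENNReal.ofReal |h y| ≤ d := by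
    intro y hy hpy
    rw [hd, distChi]
    refine le_iInf₂ fun g hg => ?_
    have : |h y| = |(h - g) y| := by
      simp [ContinuousLinearMap.sub_apply, hg y hy]
    rw [this]
    exact le_iSup₂ (f := fun v (_ : v ∈ {v : X | p i v ≤ 1}) => ENNReal.ofReal |(h - g) v|)
      y hpy
  have key' : ∀ y ∈ Y, p i y ≤ 1 → |h y| ≤ c := by
    intro y hy hpy
    have := key y hy hpy
    rw [hc]
    exact (ENNReal.ofReal_le_iff_le_toReal hfin.ne).mp this
  -- Step 2: |h y| ≤ c * p i y for all y ∈ Y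
  have bound : ∀ y ∈ Y, |h y| ≤ c * p i y := by
    intro y hy
    rcases eq_or_lt_of_le (apply_nonneg (p i) y) with h0 | hpos
    · -- p i y = 0
      have hzero : |h y| = 0 := by
        by_contra hne
        have habs : 0 < |h y| := lt_of_le_of_ne (abs_nonneg _) (Ne.symm hne)
        obtain ⟨n, hn⟩ := exists_nat_gt (c / |h y|)
        have hmem : p i ((n : ℝ) • y) ≤ 1 := by
          rw [map_smul_eq_mul, ← h0, mul_zero]; norm_num
        have := key' _ (Y.smul_mem _ hy) hmem
        rw [map_smul, smul_eq_mul, abs_mul, abs_of_nonneg (by positivity : (0:ℝ) ≤ (n:ℝ))]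
          at this
        have : (n : ℝ) ≤ c / |h y| := by
          rw [le_div_iff₀ habs]; exact this
        linarith
      rw [hzero, ← h0, mul_zero]
    · -- p i y > 0
      have ht : (0:ℝ) < (p i y)⁻¹ := inv_pos.mpr hpos
      have hmem : p i ((p i y)⁻¹ • y) ≤ 1 := by
        rw [map_smul_eq_mul, Real.norm_eq_abs, abs_of_pos ht, inv_mul_cancel₀ hpos.ne']
      have := key' _ (Y.smul_mem _ hy) hmem
      rw [map_smul, smul_eq_mul, abs_mul, abs_of_pos ht] at this
      calc |h y| = p i y * ((p i y)⁻¹ * |h y|) := by field_simp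
        _ ≤ p i y * c := mul_le_mul_of_nonneg_left this hpos.le
        _ = c * p i y := mul_comm _ _
  -- Step 3: Hahn–Banach extension of h|_Y dominated by c * p i
  obtain ⟨f, hf_eq, hf_le⟩ := exists_extension_of_le_sublinear
    ⟨Y, (h : X →ₗ[ℝ] ℝ).comp Y.subtype⟩ (fun x => c * p i x)
    (fun r hr x => by
      simp only [map_smul_eq_mul, Real.norm_eq_abs, abs_of_pos hr]; ring)
    (fun x y => by
      have := map_add_le_add (p i) x y
      nlinarith [apply_nonneg (p i) x, apply_nonneg (p i) y])
    (fun x => (le_abs_self _).trans (bound x.1 x.2))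
  have hf_abs : ∀ x, |f x| ≤ c * p i x := by
    intro x
    rw [abs_le]
    constructor
    · have := hf_le (-x)
      simp only [map_neg, map_neg_eq_map] at this
      linarith
    · exact hf_le x
  -- continuity of f
  have hf_cont : Continuous f := by
    refine Seminorm.cont_withSeminorms_normedSpace ℝ hp f ⟨{i}, ⟨c, hc0⟩, ?_⟩
    intro x
    simp only [Seminorm.comp_apply, Finset.sup_singleton, Seminorm.smul_apply,
      NNReal.smul_def, smul_eq_mul, coe_normSeminorm, Real.norm_eq_abs]
    exact hf_abs x
  set F : X →L[ℝ] ℝ := ⟨f, hf_cont⟩ with hF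
  refine ⟨h - F, fun y hy => ?_, ?_⟩
  · show h y - F y = 0
    have : F y = h y := hf_eq ⟨y, hy⟩
    rw [this, sub_self]
  · have hhF : h - (h - F) = F := by abel
    rw [hhF]
    refine le_antisymm ?_ ?_
    · -- chi F ≤ d
      rw [chi]
      refine iSup₂_le fun v hv => ?_
      have : |F v| ≤ c := by
        calc |F v| ≤ c * p i v := hf_abs v
          _ ≤ c * 1 := mul_le_mul_of_nonneg_left hv hc0
          _ = c := mul_one c
      calc ENNReal.ofReal |F v| ≤ ENNReal.ofReal c := ENNReal.ofReal_le_ofReal this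
        _ = d := ENNReal.ofReal_toReal hfin.ne
    · -- d ≤ chi F
      rw [hd, distChi]
      have hmem : h - F ∈ ann Y := fun y hy => by
        show h y - F y = 0
        have h1 : F y = h y := hf_eq ⟨y, hy⟩
        rw [h1, sub_self]
      have step := iInf₂_le (f := fun s (_ : s ∈ ann Y) => chi (⇑(p i)) (h - s)) (h - F) hmem
      rwa [hhF] at step
end
end

section
/- Let Y be a subspace of X and let f ∈ X*. Then there exists ρ ∈ 𝒫 such that d_{χ_ρ}(f, Y^⊥) = χ_ρ^Y(f|_Y) < ∞, where f|_Y denotes the restriction of f to Y. -/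
open scoped ENNReal

noncomputable section

/-! Continuity of `f` and directedness of the family give a single seminorm `ρ = p i` with
`|f| ≤ C ρ`, so `M = χ_ρ^Y(f|_Y)` is finite and, by homogeneity, `|f| ≤ M ρ` on `Y`.
Hahn–Banach extends `f|_Y` to `G` on `X` with `|G| ≤ M ρ`; then `G` is continuous,
`f - G ∈ Y^⊥` and `χ_ρ(f - (f - G)) ≤ M`. Conversely every `f - s` with `s ∈ Y^⊥`
restricts to `f|_Y` on `Y`, so its `χ_ρ` is at least `M`. -/

open scoped NNReal
open Filter Topology

lemma Seminorm.abs_le_mul_of_forall_le_one {V : Type*} [AddCommGroup V] [Module ℝ V]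
    (q : Seminorm ℝ V) (g : V →ₗ[ℝ] ℝ) {M : ℝ} (h : ∀ v, q v ≤ 1 → |g v| ≤ M) (v : V) :
    |g v| ≤ M * q v := by
  -- `r⁻¹ • v` lies in the unit ball for every `r > q v`; letting `r ↓ q v` also covers `q v = 0`.
  have hscaled : ∀ r, q v < r → |g v| ≤ M * r := by
    intro r hr
    have hr0 : 0 < r := (apply_nonneg q v).trans_lt hr
    have hq : q (r⁻¹ • v) ≤ 1 := by
      rw [map_smul_eq_mul, Real.norm_of_nonneg (inv_nonneg.2 hr0.le), inv_mul_le_one₀ hr0]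
      exact hr.le
    have hle := h _ hq
    rwa [map_smul, smul_eq_mul, abs_mul, abs_of_pos (inv_pos.2 hr0), inv_mul_le_iff₀ hr0,
      mul_comm] at hle
  have hlim : Tendsto (fun r => M * r) (𝓝[>] q v) (𝓝 (M * q v)) :=
    ((continuous_const_mul M).tendsto _).mono_left nhdsWithin_le_nhds
  exact ge_of_tendsto hlim (eventually_nhdsWithin_of_forall hscaled)

lemma WithSeminorms.exists_le_mul_of_directed {𝕜 E ι : Type*} [NontriviallyNormedField 𝕜]
    [AddCommGroup E] [Module 𝕜 E] [TopologicalSpace E] [Nonempty ι] {p : SeminormFamily 𝕜 E ι}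
    (hp : WithSeminorms p) (hdir : Directed (· ≤ ·) p) (q : Seminorm 𝕜 E) (hq : Continuous q) :
    ∃ i, ∃ C : ℝ≥0, ∀ x, q x ≤ C * p i x := by
  obtain ⟨s, C, -, hC⟩ := Seminorm.bound_of_continuous hp q hq
  obtain ⟨i, hi⟩ := hdir.finset_le s
  exact ⟨i, C, fun x => (hC x).trans
    (mul_le_mul_of_nonneg_left (Finset.sup_le hi x) C.coe_nonneg)⟩

section chi

variable {V : Type*} [AddCommGroup V] [Module ℝ V] [TopologicalSpace V]
  {ρ : V → ℝ} {g : V →L[ℝ] ℝ}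

lemma chi_le_iff {c : ℝ≥0∞} : chi ρ g ≤ c ↔ ∀ v, ρ v ≤ 1 → ENNReal.ofReal |g v| ≤ c :=
  iSup₂_le_iff

lemma ofReal_abs_le_chi {v : V} (hv : ρ v ≤ 1) : ENNReal.ofReal |g v| ≤ chi ρ g :=
  chi_le_iff.1 le_rfl v hv

lemma abs_le_toReal_chi (hg : chi ρ g ≠ ⊤) {v : V} (hv : ρ v ≤ 1) : |g v| ≤ (chi ρ g).toReal :=
  (ENNReal.ofReal_le_iff_le_toReal hg).1 (ofReal_abs_le_chi hv)

lemma chi_le_of_abs_le_mul {C : ℝ≥0} (h : ∀ v, |g v| ≤ C * ρ v) : chi ρ g ≤ C :=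
  chi_le_iff.2 fun v hv => ENNReal.ofReal_coe_nnreal ▸ ENNReal.ofReal_le_ofReal
    ((h v).trans (mul_le_of_le_one_right C.coe_nonneg hv))

lemma abs_le_toNNReal_chi_mul (q : Seminorm ℝ V) (hg : chi q g ≠ ⊤) (v : V) :
    |g v| ≤ (chi q g).toNNReal * q v :=
  q.abs_le_mul_of_forall_le_one g (fun _ hw => abs_le_toReal_chi hg hw) v

lemma sub_mem_ann {W : Submodule ℝ V} {f g : V →L[ℝ] ℝ} (h : ∀ y : W, f y = g y) :
    f - g ∈ ann W :=
  fun y hy => sub_eq_zero.2 (h ⟨y, hy⟩)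

lemma chiSub_le_chi_sub {W : Submodule ℝ V} {f s : V →L[ℝ] ℝ} (hs : s ∈ ann W) :
    chiSub W ρ (f.comp W.subtypeL) ≤ chi ρ (f - s) :=
  chi_le_iff.2 fun y hy => by
    have hfs : (f - s) y = f y := by rw [sub_apply, hs y y.2, sub_zero]
    exact hfs ▸ ofReal_abs_le_chi hy

lemma chiSub_le_distChi {W : Submodule ℝ V} {f : V →L[ℝ] ℝ} :
    chiSub W ρ (f.comp W.subtypeL) ≤ distChi ρ f (ann W) :=
  le_iInf₂ fun _ hs => chiSub_le_chi_sub hs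

end chi

theorem statement3 {X : Type*} [AddCommGroup X] [Module ℝ X] [TopologicalSpace X]
    {ι : Type*} [Nonempty ι] (p : SeminormFamily ℝ X ι) (hp : WithSeminorms p)
    (hdir : Directed (· ≤ ·) p) (Y : Submodule ℝ X) (f : X →L[ℝ] ℝ) :
    ∃ i : ι, distChi (⇑(p i)) f (ann Y) = chiSub Y (⇑(p i)) (f.comp Y.subtypeL) ∧
      chiSub Y (⇑(p i)) (f.comp Y.subtypeL) < ⊤ := by
  obtain ⟨i, C, hC⟩ := hp.exists_le_mul_of_directed hdir (f : X →ₗ[ℝ] ℝ).toSeminorm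
    f.continuous.norm
  set fY := f.comp Y.subtypeL
  have hfin : chiSub Y (p i) fY < ⊤ :=
    (chi_le_of_abs_le_mul fun y : Y => hC y).trans_lt ENNReal.coe_lt_top
  set M := (chiSub Y (p i) fY).toNNReal
  have hYbound : ∀ y : Y, |fY y| ≤ M * p i y :=
    abs_le_toNNReal_chi_mul ((p i).comp Y.subtype) hfin.ne
  have := hp.toPolynormableSpace
  obtain ⟨G, hGY, hG⟩ := Module.Dual.exists_continuous_extension_of_le_seminorm_real Y
    fY.toLinearMap (p := M • p i) ((hp.continuous_seminorm i).const_smul M)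
    fun y => (le_abs_self _).trans (hYbound y)
  refine ⟨i, le_antisymm ?_ chiSub_le_distChi, hfin⟩
  calc distChi (p i) f (ann Y) ≤ chi (p i) (f - (f - G)) :=
        biInf_le _ (sub_mem_ann fun y => (hGY y).symm)
    _ = chi (p i) G := by rw [sub_sub_cancel]
    _ ≤ M := chi_le_of_abs_le_mul hG
    _ = chiSub Y (p i) fY := ENNReal.coe_toNNReal hfin.ne
end
end

section
/- Let Y be a subspace of X. Then Y has property-USNP if and only if for every f ∈ X* there exists f̃ ∈ Y^⊥ such that P_{Y^⊥,χ_ρ}(f) = {f̃} for every ρ ∈ 𝒫 with χ_ρ^X(f) < ∞ (i.e., f has a unique 𝒫_f-simultaneous best approximation in Y^⊥, where 𝒫_f = {ρ ∈ 𝒫 : χ_ρ^X(f) < ∞}). -/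
open scoped ENNReal

noncomputable section

/-- Property-USNP of a subspace `W` with respect to the family `p` of seminorms. -/
def USNP {V : Type*} [AddCommGroup V] [Module ℝ V] [TopologicalSpace V]
    {ι : Type*} (p : ι → V → ℝ) (W : Submodule ℝ V) : Prop :=
  ∀ f : W →L[ℝ] ℝ, ∃ ft : V →L[ℝ] ℝ, ∀ i, chiSub W (p i) f < ⊤ →
    IsHBE W (p i) f ft ∧ ∀ g : V →L[ℝ] ℝ, IsHBE W (p i) f g → g = ft

/-- The metric projection `P_{S,χ_ρ}(f)`. -/
def projSet {V : Type*} [AddCommGroup V] [Module ℝ V] [TopologicalSpace V]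
    (ρ : V → ℝ) (S : Set (V →L[ℝ] ℝ)) (f : V →L[ℝ] ℝ) : Set (V →L[ℝ] ℝ) :=
  {s ∈ S | chi ρ (f - s) = distChi ρ f S}

section Aux

variable {V : Type*} [AddCommGroup V] [Module ℝ V] [TopologicalSpace V]

lemma chi_mono {ρ ρ' : V → ℝ} (h : ∀ x, ρ x ≤ ρ' x) (g : V →L[ℝ] ℝ) :
    chi ρ' g ≤ chi ρ g := by
  refine iSup₂_le fun v hv => ?_
  exact le_iSup₂ (f := fun v (_ : v ∈ {v : V | ρ v ≤ 1}) => ENNReal.ofReal |g v|) v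
    (le_trans (h v) hv)

lemma chi_le_ofReal {ρ : V → ℝ} {g : V →L[ℝ] ℝ} {C : ℝ}
    (hb : ∀ v, ρ v ≤ 1 → |g v| ≤ C) : chi ρ g ≤ ENNReal.ofReal C :=
  iSup₂_le fun v hv => ENNReal.ofReal_le_ofReal (hb v hv)

lemma abs_le_of_chi_le {ρ : V → ℝ} {g : V →L[ℝ] ℝ} {C : ℝ} (hC : 0 ≤ C)
    (h : chi ρ g ≤ ENNReal.ofReal C) {v : V} (hv : ρ v ≤ 1) : |g v| ≤ C := by
  have h1 : ENNReal.ofReal |g v| ≤ ENNReal.ofReal C :=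
    le_trans (le_iSup₂ (f := fun v (_ : v ∈ {v : V | ρ v ≤ 1}) => ENNReal.ofReal |g v|) v hv) h
  rwa [ENNReal.ofReal_le_ofReal_iff hC] at h1

lemma chi_le_iff_s5 (ρ : Seminorm ℝ V) (g : V →L[ℝ] ℝ) {C : ℝ} (hC : 0 ≤ C) :
    chi ⇑ρ g ≤ ENNReal.ofReal C ↔ ∀ x, |g x| ≤ C * ρ x := by
  constructor
  · intro h x
    rcases eq_or_lt_of_le (apply_nonneg ρ x) with hρ | hρ
    · have hz : g x = 0 := by
        by_contra hne
        have hgx : 0 < |g x| := abs_pos.mpr hne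
        set t := (C + 1) / |g x| with ht_def
        have ht : 0 < t := div_pos (by linarith) hgx
        have hρt : ρ (t • x) ≤ 1 := by
          rw [map_smul_eq_mul, ← hρ, mul_zero]; norm_num
        have h2 : |g (t • x)| ≤ C := abs_le_of_chi_le hC h hρt
        rw [map_smul, smul_eq_mul, abs_mul, abs_of_pos ht, ht_def,
          div_mul_cancel₀ _ (ne_of_gt hgx)] at h2
        linarith
      rw [hz, abs_zero, ← hρ, mul_zero]
    · have hρv : ρ ((ρ x)⁻¹ • x) ≤ 1 := by
        rw [map_smul_eq_mul, norm_inv, Real.norm_eq_abs, abs_of_pos hρ,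
          inv_mul_cancel₀ (ne_of_gt hρ)]
      have h2 : |g ((ρ x)⁻¹ • x)| ≤ C := abs_le_of_chi_le hC h hρv
      rw [map_smul, smul_eq_mul, abs_mul, abs_inv, abs_of_pos hρ] at h2
      have h3 := mul_le_mul_of_nonneg_left h2 hρ.le
      rw [← mul_assoc, mul_inv_cancel₀ (ne_of_gt hρ), one_mul] at h3
      linarith
  · intro h
    refine chi_le_ofReal fun v hv => ?_
    calc |g v| ≤ C * ρ v := h v
    _ ≤ C * 1 := mul_le_mul_of_nonneg_left hv hC
    _ = C := mul_one C

/-- restriction of `chi` to a subspace is smaller -/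
lemma chiSub_restrict_le (Y : Submodule ℝ V) (ρ : V → ℝ) (f : V →L[ℝ] ℝ) :
    chiSub Y ρ (f.comp Y.subtypeL) ≤ chi ρ f := by
  refine iSup₂_le fun y hy => ?_
  exact le_iSup₂ (f := fun v (_ : v ∈ {v : V | ρ v ≤ 1}) => ENNReal.ofReal |f v|) (y : V) hy

/-- `chiSub` as `chi` of the restricted seminorm -/
lemma chiSub_eq_chi_comp (Y : Submodule ℝ V) (ρ : Seminorm ℝ V) (h : Y →L[ℝ] ℝ) :
    chiSub Y ⇑ρ h = chi ⇑(ρ.comp Y.subtype) h := rfl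

end Aux

section Main

variable {X : Type*} [AddCommGroup X] [Module ℝ X] [TopologicalSpace X]
    {ι : Type*} [Nonempty ι]

lemma exists_ext (p : SeminormFamily ℝ X ι) (hp : WithSeminorms p) (Y : Submodule ℝ X)
    (i : ι) (h : Y →L[ℝ] ℝ) {C : ℝ} (hC : 0 ≤ C)
    (hb : ∀ y : Y, |h y| ≤ C * p i (y : X)) :
    ∃ F : X →L[ℝ] ℝ, F.comp Y.subtypeL = h ∧ ∀ x, |F x| ≤ C * p i x := by
  obtain ⟨g, hg1, hg2⟩ := exists_extension_of_le_sublinear ⟨Y, h.toLinearMap⟩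
    (fun x => C * p i x)
    (fun c hc x => by
      simp only [map_smul_eq_mul, Real.norm_eq_abs, abs_of_pos hc]; ring)
    (fun x y => by
      have := map_add_le_add (p i) x y
      nlinarith)
    (fun x => le_trans (le_abs_self _) (hb x))
  have habs : ∀ x, |g x| ≤ C * p i x := by
    intro x
    refine abs_le.mpr ⟨?_, hg2 x⟩
    have := hg2 (-x)
    rw [map_neg, map_neg_eq_map] at this
    linarith
  haveI := hp.topologicalAddGroup
  have hcont : Continuous g := by
    refine continuous_of_continuousAt_zero g ?_
    rw [ContinuousAt, map_zero]
    have ht : Filter.Tendsto (fun x => C * p i x) (nhds 0) (nhds 0) := by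
      have := ((hp.continuous_seminorm i).tendsto 0).const_mul C
      simpa using this
    exact squeeze_zero_norm (fun x => habs x) ht
  refine ⟨⟨g, hcont⟩, ?_, habs⟩
  ext y
  exact hg1 y

lemma exists_hbe (p : SeminormFamily ℝ X ι) (hp : WithSeminorms p) (Y : Submodule ℝ X)
    (i : ι) (h : Y →L[ℝ] ℝ) (hfin : chiSub Y ⇑(p i) h < ⊤) :
    ∃ F : X →L[ℝ] ℝ, F.comp Y.subtypeL = h ∧ chi ⇑(p i) F = chiSub Y ⇑(p i) h := by
  set C := (chiSub Y ⇑(p i) h).toReal with hC_def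
  have hC : 0 ≤ C := ENNReal.toReal_nonneg
  have hle : chiSub Y ⇑(p i) h ≤ ENNReal.ofReal C := by
    rw [hC_def, ENNReal.ofReal_toReal hfin.ne]
  have hb : ∀ y : Y, |h y| ≤ C * p i (y : X) := by
    intro y
    have := (chi_le_iff_s5 ((p i).comp Y.subtype) h hC).mp
      (by rw [← chiSub_eq_chi_comp]; exact hle) y
    simpa using this
  obtain ⟨F, hF1, hF2⟩ := exists_ext p hp Y i h hC hb
  refine ⟨F, hF1, le_antisymm ?_ ?_⟩
  · calc chi ⇑(p i) F ≤ ENNReal.ofReal C := (chi_le_iff_s5 (p i) F hC).mpr hF2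
    _ = chiSub Y ⇑(p i) h := ENNReal.ofReal_toReal hfin.ne
  · rw [← hF1]
    exact chiSub_restrict_le Y ⇑(p i) F

lemma key_lemma (p : SeminormFamily ℝ X ι) (hp : WithSeminorms p) (Y : Submodule ℝ X)
    (i : ι) (f : X →L[ℝ] ℝ)
    (hfin : chiSub Y ⇑(p i) (f.comp Y.subtypeL) < ⊤) :
    distChi ⇑(p i) f (ann Y) = chiSub Y ⇑(p i) (f.comp Y.subtypeL) ∧
      ∀ e : X →L[ℝ] ℝ, IsHBE Y ⇑(p i) (f.comp Y.subtypeL) e ↔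
        f - e ∈ projSet ⇑(p i) (ann Y) f := by
  set h := f.comp Y.subtypeL with hh
  have hres : ∀ e : X →L[ℝ] ℝ, e.comp Y.subtypeL = h → f - e ∈ ann Y := by
    intro e he y hy
    have h1 := DFunLike.congr_fun he (⟨y, hy⟩ : Y)
    simp only [ContinuousLinearMap.comp_apply, Submodule.subtypeL_apply, hh] at h1
    show (f - e) y = 0
    simp only [ContinuousLinearMap.sub_apply]
    rw [h1]
    ring
  have hrl : ∀ g ∈ ann Y, (f - g).comp Y.subtypeL = h := by
    intro g hg
    ext y
    simp only [ContinuousLinearMap.comp_apply, Submodule.subtypeL_apply,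
      ContinuousLinearMap.sub_apply, hh, hg (y : X) y.2]
    ring
  have hge : chiSub Y ⇑(p i) h ≤ distChi ⇑(p i) f (ann Y) := by
    refine le_iInf₂ fun g hg => ?_
    rw [← hrl g hg]
    exact chiSub_restrict_le Y ⇑(p i) (f - g)
  obtain ⟨F, hF1, hF2⟩ := exists_hbe p hp Y i h hfin
  have hFann : f - F ∈ ann Y := hres F hF1
  have hdist : distChi ⇑(p i) f (ann Y) = chiSub Y ⇑(p i) h := by
    refine le_antisymm ?_ hge
    calc distChi ⇑(p i) f (ann Y) ≤ chi ⇑(p i) (f - (f - F)) := iInf₂_le (f - F) hFann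
    _ = chiSub Y ⇑(p i) h := by rw [sub_sub_cancel]; exact hF2
  refine ⟨hdist, fun e => ⟨?_, ?_⟩⟩
  · rintro ⟨he1, he2⟩
    refine ⟨hres e he1, ?_⟩
    rw [sub_sub_cancel, he2, hdist]
  · rintro ⟨hmem, heq⟩
    constructor
    · ext y
      have h1 := hmem (y : X) y.2
      simp only [ContinuousLinearMap.sub_apply] at h1
      simp only [ContinuousLinearMap.comp_apply, Submodule.subtypeL_apply, hh]
      linarith
    · rw [← sub_sub_cancel f e, heq, hdist]

end Main

theorem statement5 {X : Type*} [AddCommGroup X] [Module ℝ X] [TopologicalSpace X]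
    {ι : Type*} [Nonempty ι] (p : SeminormFamily ℝ X ι) (hp : WithSeminorms p)
    (hdir : Directed (· ≤ ·) p) (Y : Submodule ℝ X) :
    USNP (fun i => ⇑(p i)) Y ↔
      ∀ f : X →L[ℝ] ℝ, ∃ ft ∈ ann Y,
        ∀ i : ι, chi (⇑(p i)) f < ⊤ → projSet (⇑(p i)) (ann Y) f = {ft} := by
  constructor
  · intro hU f
    by_cases hex : ∃ i, chi ⇑(p i) f < ⊤
    · obtain ⟨i₀, hi₀⟩ := hex
      obtain ⟨ht, hht⟩ := hU (f.comp Y.subtypeL)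
      have hfin : ∀ i, chi ⇑(p i) f < ⊤ → chiSub Y ⇑(p i) (f.comp Y.subtypeL) < ⊤ :=
        fun i hi => lt_of_le_of_lt (chiSub_restrict_le Y ⇑(p i) f) hi
      have h0 := hht i₀ (hfin i₀ hi₀)
      have hann : f - ht ∈ ann Y := by
        intro y hy
        have h1 := DFunLike.congr_fun h0.1.1 (⟨y, hy⟩ : Y)
        simp only [ContinuousLinearMap.comp_apply, Submodule.subtypeL_apply] at h1
        show (f - ht) y = 0
        simp only [ContinuousLinearMap.sub_apply]
        rw [h1]
        ring
      refine ⟨f - ht, hann, fun i hi => ?_⟩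
      obtain ⟨hHBE, huniq⟩ := hht i (hfin i hi)
      obtain ⟨hd, hiff⟩ := key_lemma p hp Y i f (hfin i hi)
      ext g
      simp only [Set.mem_singleton_iff]
      constructor
      · intro hg
        have h2 : IsHBE Y ⇑(p i) (f.comp Y.subtypeL) (f - g) :=
          (hiff (f - g)).mpr (by rw [sub_sub_cancel]; exact hg)
        have h3 : f - g = ht := huniq (f - g) h2
        rw [← h3, sub_sub_cancel]
      · intro hg
        rw [hg]
        exact (hiff ht).mp hHBE
    · push_neg at hex
      exact ⟨0, fun y _ => rfl, fun i hi => absurd hi (not_lt.mpr (hex i))⟩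
  · intro hA h
    by_cases hex : ∃ i, chiSub Y ⇑(p i) h < ⊤
    · obtain ⟨i₀, hi₀⟩ := hex
      have main : ∀ i, chiSub Y ⇑(p i) h < ⊤ → ∃ F : X →L[ℝ] ℝ,
          (F.comp Y.subtypeL = h ∧ chi ⇑(p i) F = chiSub Y ⇑(p i) h) ∧
          ∀ j, chi ⇑(p j) F < ⊤ →
            (IsHBE Y ⇑(p j) h F ∧ ∀ g, IsHBE Y ⇑(p j) h g → g = F) := by
        intro i hi
        obtain ⟨F, hF1, hF2⟩ := exists_hbe p hp Y i h hi
        obtain ⟨g₀, hg₀ann, hg₀⟩ := hA F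
        have hFi : chi ⇑(p i) F < ⊤ := by rw [hF2]; exact hi
        obtain ⟨hd, hiff⟩ := key_lemma p hp Y i F (by rw [hF1]; exact hi)
        have hg0 : g₀ = 0 := by
          have h0mem : (0 : X →L[ℝ] ℝ) ∈ projSet ⇑(p i) (ann Y) F := by
            refine ⟨fun y _ => rfl, ?_⟩
            rw [sub_zero, hd, hF1]
            exact hF2
          rw [hg₀ i hFi] at h0mem
          exact (Set.mem_singleton_iff.mp h0mem).symm
        refine ⟨F, ⟨hF1, hF2⟩, fun j hj => ?_⟩
        have hjfin : chiSub Y ⇑(p j) h < ⊤ := by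
          rw [← hF1]
          exact lt_of_le_of_lt (chiSub_restrict_le Y ⇑(p j) F) hj
        obtain ⟨hdj, hiffj⟩ := key_lemma p hp Y j F (by rw [hF1]; exact hjfin)
        have hproj : projSet ⇑(p j) (ann Y) F = {(0 : X →L[ℝ] ℝ)} := by
          rw [hg₀ j hj, hg0]
        have hFHBE : IsHBE Y ⇑(p j) (F.comp Y.subtypeL) F := by
          apply (hiffj F).mpr
          rw [sub_self, hproj]
          exact rfl
        constructor
        · rw [← hF1]
          exact hFHBE
        · intro g hg
          have hg' : IsHBE Y ⇑(p j) (F.comp Y.subtypeL) g := by rw [hF1]; exact hg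
          have hmem := (hiffj g).mp hg'
          rw [hproj] at hmem
          have hz : F - g = 0 := hmem
          exact (sub_eq_zero.mp hz).symm
      obtain ⟨F, hF, hFall⟩ := main i₀ hi₀
      refine ⟨F, fun i hi => ?_⟩
      obtain ⟨Fi, hFi, hFiall⟩ := main i hi
      obtain ⟨k, hk1, hk2⟩ := hdir i i₀
      have hFk : chi ⇑(p k) F < ⊤ :=
        lt_of_le_of_lt (chi_mono (fun x => hk2 x) F) (by rw [hF.2]; exact hi₀)
      have hFik : chi ⇑(p k) Fi < ⊤ :=
        lt_of_le_of_lt (chi_mono (fun x => hk1 x) Fi) (by rw [hFi.2]; exact hi)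
      have hEq : Fi = F := (hFall k hFk).2 Fi (hFiall k hFik).1
      have hFii : chi ⇑(p i) Fi < ⊤ := by rw [hFi.2]; exact hi
      have hfin := hFiall i hFii
      rw [hEq] at hfin
      exact hfin
    · push_neg at hex
      exact ⟨0, fun i hi => absurd hi (not_lt.mpr (hex i))⟩
end
end

section
/- Let Y be a subspace of X, let (f,ρ) be a pair on Y, and suppose there exists g ∈ X* with g|_Y = 0 and 0 < χ_ρ^X(g) < ∞. Then for every real number r > χ_ρ^Y(f) there exist distinct f₁, f₂ ∈ X* with f₁|_Y = f₂|_Y = f and χ_ρ^X(f₁) = χ_ρ^X(f₂) = r. -/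
open scoped ENNReal

noncomputable section

lemma chi_le_ofReal_iff {V : Type*} [AddCommGroup V] [Module ℝ V] [TopologicalSpace V]
    (ρ : V → ℝ) (g : V →L[ℝ] ℝ) {C : ℝ} (hC : 0 ≤ C) :
    chi ρ g ≤ ENNReal.ofReal C ↔ ∀ v, ρ v ≤ 1 → |g v| ≤ C := by
  constructor
  · intro h v hv
    have h1 : ENNReal.ofReal |g v| ≤ chi ρ g :=
      le_iSup₂ (f := fun v (_ : v ∈ {v : V | ρ v ≤ 1}) => ENNReal.ofReal |g v|) v hv
    have := h1.trans h
    rwa [ENNReal.ofReal_le_ofReal_iff hC] at this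
  · intro h
    exact iSup₂_le fun v hv => ENNReal.ofReal_le_ofReal (h v hv)

lemma ofReal_le_chi {V : Type*} [AddCommGroup V] [Module ℝ V] [TopologicalSpace V]
    (ρ : V → ℝ) (g : V →L[ℝ] ℝ) {v : V} (hv : ρ v ≤ 1) :
    ENNReal.ofReal |g v| ≤ chi ρ g :=
  le_iSup₂ (f := fun v (_ : v ∈ {v : V | ρ v ≤ 1}) => ENNReal.ofReal |g v|) v hv

set_option maxHeartbeats 1000000 in
theorem statement9 {X : Type*} [AddCommGroup X] [Module ℝ X] [TopologicalSpace X]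
    {ι : Type*} [Nonempty ι] (p : SeminormFamily ℝ X ι) (hp : WithSeminorms p)
    (hdir : Directed (· ≤ ·) p) (Y : Submodule ℝ X)
    (f : Y →L[ℝ] ℝ) (i : ι) (hpair : chiSub Y (⇑(p i)) f < ⊤)
    (g : X →L[ℝ] ℝ) (hgY : g.comp Y.subtypeL = 0)
    (hg0 : 0 < chi (⇑(p i)) g) (hgfin : chi (⇑(p i)) g < ⊤)
    (r : ℝ) (hr : chiSub Y (⇑(p i)) f < ENNReal.ofReal r) :
    ∃ f₁ f₂ : X →L[ℝ] ℝ, f₁ ≠ f₂ ∧ f₁.comp Y.subtypeL = f ∧ f₂.comp Y.subtypeL = f ∧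
      chi (⇑(p i)) f₁ = ENNReal.ofReal r ∧ chi (⇑(p i)) f₂ = ENNReal.ofReal r := by
  classical
  set ρ : X → ℝ := ⇑(p i) with hρ
  -- the constant bounding f on Y
  set c : ℝ := (chiSub Y ρ f).toReal with hc
  have hc0 : 0 ≤ c := ENNReal.toReal_nonneg
  have hchiSub_eq : chiSub Y ρ f = ENNReal.ofReal c := by
    rw [hc, ENNReal.ofReal_toReal hpair.ne]
  have hcr : c < r := by
    by_contra hcon
    push_neg at hcon
    have h1 : ENNReal.ofReal r ≤ chiSub Y ρ f := by
      rw [hchiSub_eq]; exact ENNReal.ofReal_le_ofReal hcon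
    exact lt_irrefl _ (lt_of_lt_of_le hr h1)
  have hr0 : 0 < r := lt_of_le_of_lt hc0 hcr
  -- bound for f on Y : |f y| ≤ c
  have hfbound : ∀ y : Y, ρ (y : X) ≤ 1 → |f y| ≤ c := by
    intro y hy
    exact (chi_le_ofReal_iff _ f hc0).mp (le_of_eq hchiSub_eq) y hy
  -- |f y| ≤ c * ρ y for all y
  have hfdom : ∀ y : Y, |f y| ≤ c * ρ (y : X) := by
    intro y
    rcases lt_or_eq_of_le (apply_nonneg (p i) (y : X)) with hpos | hzero
    · have h1 : ρ ((((p i) (y:X))⁻¹ • y : Y) : X) ≤ 1 := by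
        have : ρ (((p i) (y:X))⁻¹ • (y : X)) = ((p i) (y:X))⁻¹ * ρ (y:X) := by
          rw [hρ, map_smul_eq_mul, Real.norm_eq_abs, abs_of_nonneg (by positivity)]
        simp only [Submodule.coe_smul, this]
        rw [inv_mul_cancel₀ (ne_of_gt hpos)]
      have := hfbound _ h1
      rw [map_smul, smul_eq_mul, abs_mul, abs_of_nonneg (by positivity : (0:ℝ) ≤ ((p i) (y:X))⁻¹)] at this
      calc |f y| = (p i) (y:X) * (((p i) (y:X))⁻¹ * |f y|) := by
            field_simp
        _ ≤ (p i) (y:X) * c := by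
            exact mul_le_mul_of_nonneg_left this (le_of_lt hpos)
        _ = c * ρ (y:X) := by ring
    · -- ρ y = 0 : then |t| * |f y| ≤ c for all t, so f y = 0
      have hz : ∀ t : ℝ, 0 < t → t * |f y| ≤ c := by
        intro t ht
        have h1 : ρ ((t • y : Y) : X) ≤ 1 := by
          have : (p i) (t • (y : X)) = |t| * (p i) (y:X) := map_smul_eq_mul _ _ _
          simp only [Submodule.coe_smul, hρ, this, ← hzero, mul_zero]
          norm_num
        have := hfbound _ h1
        rwa [map_smul, smul_eq_mul, abs_mul, abs_of_pos ht] at this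
      have hfy : f y = 0 := by
        by_contra hne
        have habs : 0 < |f y| := abs_pos.mpr hne
        have := hz ((c + 1) / |f y|) (by positivity)
        rw [div_mul_cancel₀ _ (ne_of_gt habs)] at this
        linarith
      have hz0 : ρ (y : X) = 0 := hzero.symm
      rw [hfy, hz0, abs_zero, mul_zero]
  -- Hahn-Banach extension
  obtain ⟨F, hFext, hFle⟩ := exists_extension_of_le_sublinear
    ⟨Y, f.toLinearMap⟩ (fun x => c * ρ x)
    (fun t ht x => by
      simp only [hρ, map_smul_eq_mul, Real.norm_eq_abs, abs_of_pos ht]; ring)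
    (fun x y => by
      have h := map_add_le_add (p i) x y
      simp only [hρ]
      nlinarith)
    (fun x => le_trans (le_abs_self _) (hfdom x))
  have hFabs : ∀ x : X, |F x| ≤ c * ρ x := by
    intro x
    rcases abs_cases (F x) with ⟨h1, _⟩ | ⟨h1, _⟩
    · rw [h1]; exact hFle x
    · rw [h1]
      have := hFle (-x)
      rw [map_neg] at this
      simpa [hρ] using this
  -- F is continuous
  have hFcont : Continuous F := by
    apply Seminorm.cont_withSeminorms_normedSpace ℝ hp F
    refine ⟨{i}, c.toNNReal, ?_⟩
    intro x
    simp only [Seminorm.comp_apply, Seminorm.smul_apply, Finset.sup_singleton,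
      coe_normSeminorm, NNReal.smul_def, smul_eq_mul]
    rw [Real.coe_toNNReal _ hc0]
    calc ‖F x‖ = |F x| := rfl
      _ ≤ c * ρ x := hFabs x
      _ = c * (p i) x := rfl
  set F' : X →L[ℝ] ℝ := ⟨F, hFcont⟩ with hF'
  -- set S and bound for g
  set a : ℝ := (chi ρ g).toReal with ha
  have ha0 : 0 ≤ a := ENNReal.toReal_nonneg
  have hgabs : ∀ v : X, ρ v ≤ 1 → |g v| ≤ a := by
    intro v hv
    have := ofReal_le_chi ρ g hv
    have h2 : ENNReal.ofReal |g v| ≤ ENNReal.ofReal a := by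
      rw [ha, ENNReal.ofReal_toReal hgfin.ne]; exact this
    rwa [ENNReal.ofReal_le_ofReal_iff ha0] at h2
  -- witness v₀ with |g v₀| > 0
  obtain ⟨v₀, hv₀S, hv₀⟩ : ∃ v : X, ρ v ≤ 1 ∧ 0 < |g v| := by
    by_contra hcon
    push_neg at hcon
    have : chi ρ g ≤ ENNReal.ofReal 0 := by
      apply (chi_le_ofReal_iff ρ g le_rfl).mpr
      intro v hv; exact hcon v hv
    simp only [ENNReal.ofReal_zero, nonpos_iff_eq_zero] at this
    rw [this] at hg0; exact lt_irrefl _ hg0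
  set ε : ℝ := |g v₀| with hε
  have hε0 : 0 < ε := hv₀
  -- the subtype of the "unit ball"
  have hSne : Nonempty {v : X // ρ v ≤ 1} := ⟨⟨0, by simp [hρ]⟩⟩
  -- φ t = sup over unit ball of |F' v + t * g v|
  set φ : ℝ → ℝ := fun t => ⨆ v : {v : X // ρ v ≤ 1}, |F (v : X) + t * g (v : X)| with hφ
  have hbdd : ∀ t : ℝ, BddAbove (Set.range fun v : {v : X // ρ v ≤ 1} =>
      |F (v : X) + t * g (v : X)|) := by
    intro t
    refine ⟨c + |t| * a, ?_⟩
    rintro x ⟨v, rfl⟩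
    calc |F (v:X) + t * g (v:X)| ≤ |F (v:X)| + |t * g (v:X)| := abs_add_le _ _
      _ ≤ c + |t| * a := by
          have h1 : |F (v:X)| ≤ c := le_trans (hFabs _)
            (by nlinarith [v.2, apply_nonneg (p i) (v : X)])
          have h2 : |g (v:X)| ≤ a := hgabs _ v.2
          rw [abs_mul]
          nlinarith [abs_nonneg t]
  have hφ_le : ∀ t C : ℝ, (∀ v : X, ρ v ≤ 1 → |F v + t * g v| ≤ C) → φ t ≤ C := by
    intro t C h
    exact ciSup_le fun v => h v v.2
  have hφ_ge : ∀ t : ℝ, ∀ v : X, ρ v ≤ 1 → |F v + t * g v| ≤ φ t := by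
    intro t v hv
    exact le_ciSup (hbdd t) ⟨v, hv⟩
  have hφ0 : φ 0 ≤ c := by
    apply hφ_le
    intro v hv
    simp only [zero_mul, add_zero]
    exact le_trans (hFabs v) (by nlinarith [apply_nonneg (p i) v])
  -- Lipschitz-type estimate
  have hφ_lip : ∀ s t : ℝ, φ t ≤ φ s + |t - s| * a := by
    intro s t
    apply hφ_le
    intro v hv
    calc |F v + t * g v| = |(F v + s * g v) + (t - s) * g v| := by ring_nf
      _ ≤ |F v + s * g v| + |(t - s) * g v| := abs_add_le _ _
      _ ≤ φ s + |t - s| * a := by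
          have := hφ_ge s v hv
          have h2 := hgabs v hv
          rw [abs_mul]
          nlinarith [abs_nonneg (t - s), abs_nonneg (g v)]
  have hφ_cont : Continuous φ := by
    apply LipschitzWith.continuous (K := a.toNNReal)
    apply LipschitzWith.of_dist_le_mul
    intro t s
    rw [Real.dist_eq, Real.dist_eq, Real.coe_toNNReal _ ha0]
    rw [abs_sub_le_iff]
    constructor
    · have := hφ_lip s t
      nlinarith [abs_nonneg (t - s)]
    · have := hφ_lip t s
      have h2 : |s - t| = |t - s| := abs_sub_comm s t
      nlinarith [abs_nonneg (t - s)]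
  -- growth
  have hφ_grow : ∀ t : ℝ, |t| * ε - c ≤ φ t := by
    intro t
    have h1 := hφ_ge t v₀ hv₀S
    have h2 : |t * g v₀| ≤ |F v₀ + t * g v₀| + |F v₀| := by
      calc |t * g v₀| = |(F v₀ + t * g v₀) - F v₀| := by ring_nf
        _ ≤ |F v₀ + t * g v₀| + |F v₀| := abs_sub _ _
    have h3 : |F v₀| ≤ c := le_trans (hFabs v₀)
      (by nlinarith [hv₀S, apply_nonneg (p i) v₀])
    rw [abs_mul] at h2
    have hεe : ε = |g v₀| := rfl
    linarith
  set T : ℝ := (r + c) / ε with hT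
  have hT0 : 0 < T := by positivity
  have hφT : r ≤ φ T := by
    have := hφ_grow T
    rw [abs_of_pos hT0] at this
    have : T * ε = r + c := by rw [hT, div_mul_cancel₀ _ (ne_of_gt hε0)]
    have h2 := hφ_grow T
    rw [abs_of_pos hT0, this] at h2
    linarith
  have hφnegT : r ≤ φ (-T) := by
    have h2 := hφ_grow (-T)
    rw [abs_neg, abs_of_pos hT0] at h2
    have : T * ε = r + c := by rw [hT, div_mul_cancel₀ _ (ne_of_gt hε0)]
    rw [this] at h2
    linarith
  -- IVT
  have hφ0r : φ 0 ≤ r := le_of_lt (lt_of_le_of_lt hφ0 hcr)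
  obtain ⟨t₂, ht₂mem, ht₂⟩ : ∃ t ∈ Set.Icc (0:ℝ) T, φ t = r := by
    have := intermediate_value_Icc (le_of_lt hT0) hφ_cont.continuousOn
    have hmem : r ∈ Set.Icc (φ 0) (φ T) := ⟨hφ0r, hφT⟩
    obtain ⟨t, ht, htr⟩ := this hmem
    exact ⟨t, ht, htr⟩
  obtain ⟨t₁, ht₁mem, ht₁⟩ : ∃ t ∈ Set.Icc (-T) (0:ℝ), φ t = r := by
    have := intermediate_value_Icc' (by linarith : -T ≤ (0:ℝ)) hφ_cont.continuousOn
    have hmem : r ∈ Set.Icc (φ 0) (φ (-T)) := ⟨hφ0r, hφnegT⟩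
    obtain ⟨t, ht, htr⟩ := this hmem
    exact ⟨t, ht, htr⟩
  have ht₁t₂ : t₁ ≠ t₂ := by
    intro h
    have h1 : t₁ ≤ 0 := ht₁mem.2
    have h2 : 0 ≤ t₂ := ht₂mem.1
    have : t₁ = 0 := le_antisymm h1 (h ▸ h2)
    rw [this] at ht₁
    have : φ 0 < r := lt_of_le_of_lt hφ0 hcr
    linarith [ht₁]
  -- define f₁, f₂
  refine ⟨F' + t₁ • g, F' + t₂ • g, ?_, ?_, ?_, ?_, ?_⟩
  · intro h
    have := DFunLike.congr_fun h v₀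
    simp only [ContinuousLinearMap.add_apply, ContinuousLinearMap.coe_smul',
      Pi.smul_apply, smul_eq_mul] at this
    have hg0' : g v₀ ≠ 0 := by
      intro hgz
      have h2 : (0:ℝ) < |g v₀| := hv₀
      rw [hgz, abs_zero] at h2
      exact lt_irrefl _ h2
    have : t₁ * g v₀ = t₂ * g v₀ := by linarith
    exact ht₁t₂ (mul_right_cancel₀ hg0' this)
  · ext y
    have hgy : g (y : X) = 0 := by
      have := DFunLike.congr_fun hgY y
      simpa using this
    simp only [ContinuousLinearMap.comp_apply, ContinuousLinearMap.add_apply,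
      ContinuousLinearMap.coe_smul', Pi.smul_apply, smul_eq_mul, Submodule.subtypeL_apply]
    rw [hgy]
    have := hFext ⟨(y : X), y.2⟩
    simp only [LinearMap.toPMap_apply, ContinuousLinearMap.coe_coe] at this
    simpa [hF'] using this
  · ext y
    have hgy : g (y : X) = 0 := by
      have := DFunLike.congr_fun hgY y
      simpa using this
    simp only [ContinuousLinearMap.comp_apply, ContinuousLinearMap.add_apply,
      ContinuousLinearMap.coe_smul', Pi.smul_apply, smul_eq_mul, Submodule.subtypeL_apply]
    rw [hgy]
    have := hFext ⟨(y : X), y.2⟩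
    simp only [LinearMap.toPMap_apply, ContinuousLinearMap.coe_coe] at this
    simpa [hF'] using this
  · -- chi of f₁
    have key : ∀ t : ℝ, φ t = r → chi ρ (F' + t • g) = ENNReal.ofReal r := by
      intro t htr
      apply le_antisymm
      · apply (chi_le_ofReal_iff _ _ (le_of_lt hr0)).mpr
        intro v hv
        have := hφ_ge t v hv
        rw [htr] at this
        simpa [hF'] using this
      · apply le_of_forall_lt
        intro b hb
        rcases eq_or_ne b ⊤ with rfl | hbtop
        · exact absurd hb (by simp)
        have hbr : b.toReal < r := by
          have := ENNReal.toReal_lt_toReal hbtop (by simp [ENNReal.ofReal_ne_top]) |>.mpr hb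
          rwa [ENNReal.toReal_ofReal (le_of_lt hr0)] at this
        have : b.toReal < φ t := by rw [htr]; exact hbr
        obtain ⟨v, hv⟩ := exists_lt_of_lt_ciSup this
        have hlt : b < ENNReal.ofReal |F (v:X) + t * g (v:X)| := by
          rw [← ENNReal.ofReal_toReal hbtop]
          exact (ENNReal.ofReal_lt_ofReal_iff
            (lt_of_le_of_lt ENNReal.toReal_nonneg hv)).mpr hv
        refine lt_of_lt_of_le hlt ?_
        have h3 := ofReal_le_chi ρ (F' + t • g) v.2
        simpa [hF'] using h3
    exact key t₁ ht₁
  · have key : ∀ t : ℝ, φ t = r → chi ρ (F' + t • g) = ENNReal.ofReal r := by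
      intro t htr
      apply le_antisymm
      · apply (chi_le_ofReal_iff _ _ (le_of_lt hr0)).mpr
        intro v hv
        have := hφ_ge t v hv
        rw [htr] at this
        simpa [hF'] using this
      · apply le_of_forall_lt
        intro b hb
        rcases eq_or_ne b ⊤ with rfl | hbtop
        · exact absurd hb (by simp)
        have hbr : b.toReal < r := by
          have := ENNReal.toReal_lt_toReal hbtop (by simp [ENNReal.ofReal_ne_top]) |>.mpr hb
          rwa [ENNReal.toReal_ofReal (le_of_lt hr0)] at this
        have : b.toReal < φ t := by rw [htr]; exact hbr
        obtain ⟨v, hv⟩ := exists_lt_of_lt_ciSup this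
        have hlt : b < ENNReal.ofReal |F (v:X) + t * g (v:X)| := by
          rw [← ENNReal.ofReal_toReal hbtop]
          exact (ENNReal.ofReal_lt_ofReal_iff
            (lt_of_le_of_lt ENNReal.toReal_nonneg hv)).mpr hv
        refine lt_of_lt_of_le hlt ?_
        have h3 := ofReal_le_chi ρ (F' + t • g) v.2
        simpa [hF'] using h3
    exact key t₂ ht₂
end
end

section
/- Let M be a proper closed subspace of a real normed space E and let f be a continuous linear functional on M. Then: (a) there exist distinct f₁, f₂ ∈ E* with f₁|_M = f₂|_M = f and ‖f₁‖ = ‖f₂‖; (b) for every real number r > ‖f‖ there exist at least two distinct f̃₁, f̃₂ ∈ E* with f̃₁|_M = f̃₂|_M = f and ‖f̃₁‖ = ‖f̃₂‖ = r. -/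
/-!
Take a norm-preserving Hahn–Banach extension `h` of `f` and, using that `M` is closed and proper,
a nonzero `g ∈ E*` vanishing on `M`. Every `h + t • g` extends `f`, and `t ↦ ‖h + t • g‖` is
continuous, equal to `‖f‖` at `t = 0` and unbounded as `t → ±∞`; so for `r > ‖f‖` the
intermediate value theorem gives some `t > 0` and some `t < 0` with `‖h + t • g‖ = r`.
Part (a) is part (b) with `r = ‖f‖ + 1`.
-/

theorem Submodule.exists_strongDual_ne_zero_forall_mem_eq_zero {𝕜 E : Type*} [RCLike 𝕜]
    [NormedAddCommGroup E] [NormedSpace 𝕜 E] (M : Submodule 𝕜 E) [IsClosed (M : Set E)]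
    (hM : M ≠ ⊤) : ∃ g : StrongDual 𝕜 E, g ≠ 0 ∧ ∀ m ∈ M, g m = 0 := by
  obtain ⟨x, hx⟩ : ∃ x, x ∉ M := by
    by_contra! h
    exact hM (M.eq_top_iff'.mpr h)
  have hx' : M.mkQ x ≠ 0 := by simpa using hx
  obtain ⟨φ, hφ⟩ := SeparatingDual.exists_ne_zero (R := 𝕜) hx'
  refine ⟨φ.comp M.mkQL, fun h ↦ hφ ?_, fun m hm ↦ ?_⟩
  · simpa using congr($h x)
  · simp [(Submodule.Quotient.mk_eq_zero M).mpr hm]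

theorem exists_pos_norm_add_smul_eq {F : Type*} [NormedAddCommGroup F] [NormedSpace ℝ F]
    (h : F) {g : F} (hg : g ≠ 0) {r : ℝ} (hr : ‖h‖ < r) : ∃ t : ℝ, 0 < t ∧ ‖h + t • g‖ = r := by
  have hg' : 0 < ‖g‖ := norm_pos_iff.mpr hg
  set T := (r + ‖h‖) / ‖g‖
  have hT : 0 ≤ T := div_nonneg (by linarith [norm_nonneg h]) hg'.le
  have hrT : r ≤ ‖h + T • g‖ := calc
    r = ‖T • g‖ - ‖h‖ := by
      rw [norm_smul, Real.norm_of_nonneg hT, div_mul_cancel₀ _ hg'.ne']; ring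
    _ ≤ ‖h + T • g‖ := by
      have := norm_sub_le (h + T • g) h
      rw [add_sub_cancel_left] at this; linarith
  have hcont : Continuous fun t : ℝ ↦ ‖h + t • g‖ := by fun_prop
  obtain ⟨t, ht, htr⟩ := intermediate_value_Icc hT hcont.continuousOn
    ⟨by simpa using hr.le, hrT⟩
  refine ⟨t, ht.1.lt_of_ne ?_, htr⟩
  rintro rfl
  exact hr.ne (by simpa using htr)

theorem exists_two_extensions_norm_eq_of_norm_lt {E : Type*} [NormedAddCommGroup E]
    [NormedSpace ℝ E] (M : Submodule ℝ E) [IsClosed (M : Set E)] (hM : M ≠ ⊤)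
    (f : StrongDual ℝ M) {r : ℝ} (hr : ‖f‖ < r) :
    ∃ f₁ f₂ : StrongDual ℝ E, f₁ ≠ f₂ ∧ f₁.comp M.subtypeL = f ∧ f₂.comp M.subtypeL = f ∧
      ‖f₁‖ = r ∧ ‖f₂‖ = r := by
  obtain ⟨g, hg, hgM⟩ := M.exists_strongDual_ne_zero_forall_mem_eq_zero hM
  obtain ⟨h, hhf, hh⟩ := exists_extension_norm_eq M f
  obtain ⟨t₁, ht₁, hn₁⟩ := exists_pos_norm_add_smul_eq h hg (hh ▸ hr)
  obtain ⟨t₂, ht₂, hn₂⟩ := exists_pos_norm_add_smul_eq h (neg_ne_zero.mpr hg) (hh ▸ hr)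
  have hext : ∀ t : ℝ, (h + t • g).comp M.subtypeL = f := by
    intro t
    ext m
    simp [hhf, hgM m m.2]
  refine ⟨h + t₁ • g, h + (-t₂) • g, fun heq ↦ ?_, hext _, hext _, hn₁, by simpa using hn₂⟩
  have : t₁ = -t₂ := smul_left_injective ℝ hg (add_left_cancel heq)
  linarith

theorem statement10 {E : Type*} [NormedAddCommGroup E] [NormedSpace ℝ E]
    (M : Submodule ℝ E) (hM : M ≠ ⊤) (hMc : IsClosed (M : Set E))
    (f : M →L[ℝ] ℝ) :
    (∃ f₁ f₂ : E →L[ℝ] ℝ, f₁ ≠ f₂ ∧ f₁.comp M.subtypeL = f ∧ f₂.comp M.subtypeL = f ∧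
      ‖f₁‖ = ‖f₂‖) ∧
    (∀ r : ℝ, ‖f‖ < r →
      ∃ f₁ f₂ : E →L[ℝ] ℝ, f₁ ≠ f₂ ∧ f₁.comp M.subtypeL = f ∧ f₂.comp M.subtypeL = f ∧
        ‖f₁‖ = r ∧ ‖f₂‖ = r) := by
  refine ⟨?_, fun r hr ↦ exists_two_extensions_norm_eq_of_norm_lt M hM f hr⟩
  obtain ⟨f₁, f₂, hne, h₁, h₂, hn₁, hn₂⟩ :=
    exists_two_extensions_norm_eq_of_norm_lt M hM f (lt_add_one ‖f‖)
  exact ⟨f₁, f₂, hne, h₁, h₂, hn₁.trans hn₂.symm⟩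
end

section
/- Let Y be a subspace of X. (1) If Y has property-SNP, then every f ∈ X* can be expressed as f = g + h with g ∈ Y_{lcs}^# and h ∈ Y^⊥, and this decomposition is unique. (2) If every f ∈ X* has a unique such decomposition f = g + h with g ∈ Y_{lcs}^# and h ∈ Y^⊥, then whenever f₁, f₂ ∈ Y_{lcs}^# satisfy f₁ + f₂ ∈ Y^⊥, one has f₁ + f₂ = 0. -/
/-!
(1) Property-SNP attaches to `f` a functional `f̃` that is the unique Hahn–Banach extension of
`f|_Y` for every `ρ ⪰ μ`; hence `f̃ ∈ Y^#_μ` and `f = f̃ + (f - f̃)` with `f - f̃ ∈ Y^⊥`. Conversely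
every `g ∈ Y^#_ν` is a Hahn–Banach extension of `g|_Y` for all `ρ ⪰ ν`, so if `g|_Y = f|_Y` then
choosing `ρ` above both `μ` and `ν` (directedness) forces `g = f̃`.

(2) `Y_{lcs}^#` is symmetric and `0 ∈ Y^⊥`, so `f₁ = f₁ + 0 = (-f₂) + (f₁ + f₂)` are two
decompositions of `f₁`; uniqueness gives `f₁ = -f₂`.
-/

open scoped ENNReal

noncomputable section

/-- `Y^#_μ = {f ∈ X* : χ_ρ^X(f) = χ_ρ^Y(f|_Y) < ∞ for all ρ ∈ 𝒫_μ}`. -/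
def sharpMu {X : Type*} [AddCommGroup X] [Module ℝ X] [TopologicalSpace X]
    {ι : Type*} (p : SeminormFamily ℝ X ι) (Y : Submodule ℝ X) (i : ι) :
    Set (X →L[ℝ] ℝ) :=
  {f | ∀ j, p i ≤ p j →
    chi (⇑(p j)) f = chiSub Y (⇑(p j)) (f.comp Y.subtypeL) ∧ chi (⇑(p j)) f < ⊤}

/-- `Y_{lcs}^# = ⋃_{μ ∈ 𝒫} Y^#_μ`. -/
def sharpLcs {X : Type*} [AddCommGroup X] [Module ℝ X] [TopologicalSpace X]
    {ι : Type*} (p : SeminormFamily ℝ X ι) (Y : Submodule ℝ X) :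
    Set (X →L[ℝ] ℝ) :=
  ⋃ i, sharpMu p Y i

def UniqueDecomposition {G : Type*} [Add G] (S A : Set G) (f : G) : Prop :=
  ∃ g ∈ S, ∃ h ∈ A, f = g + h ∧ ∀ g' ∈ S, ∀ h' ∈ A, f = g' + h' → g' = g ∧ h' = h

theorem add_eq_zero_of_uniqueDecomposition {G : Type*} [AddCommGroup G] {S A : Set G}
    (hA : (0 : G) ∈ A) (hS : ∀ x ∈ S, -x ∈ S) {f₁ f₂ : G}
    (hdec : UniqueDecomposition S A f₁) (hf₁ : f₁ ∈ S) (hf₂ : f₂ ∈ S) (hsum : f₁ + f₂ ∈ A) :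
    f₁ + f₂ = 0 := by
  obtain ⟨g, -, h, -, -, huniq⟩ := hdec
  have h₁ : f₁ = g := (huniq f₁ hf₁ 0 hA (add_zero f₁).symm).1
  have h₂ : -f₂ = g := (huniq (-f₂) (hS f₂ hf₂) (f₁ + f₂) hsum (by abel)).1
  rw [h₁, ← h₂, neg_add_cancel]

section Functionals

variable {V : Type*} [AddCommGroup V] [Module ℝ V] [TopologicalSpace V]

theorem chi_neg (ρ : V → ℝ) (g : V →L[ℝ] ℝ) : chi ρ (-g) = chi ρ g := by
  simp only [chi, neg_apply, abs_neg]

theorem chi_antitone {ρ ρ' : V → ℝ} (h : ∀ v, ρ v ≤ ρ' v) (g : V →L[ℝ] ℝ) :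
    chi ρ' g ≤ chi ρ g :=
  biSup_mono fun v hv => (h v).trans hv

theorem chiSub_antitone (W : Submodule ℝ V) {ρ ρ' : V → ℝ} (h : ∀ v, ρ v ≤ ρ' v)
    (f : W →L[ℝ] ℝ) : chiSub W ρ' f ≤ chiSub W ρ f :=
  chi_antitone (V := W) (fun w => h w) f

theorem zero_mem_ann (W : Submodule ℝ V) : (0 : V →L[ℝ] ℝ) ∈ ann W :=
  fun y _ => zero_apply y

theorem comp_subtypeL_eq_of_eq_add_of_mem_ann {W : Submodule ℝ V} {f g h : V →L[ℝ] ℝ}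
    (hfgh : f = g + h) (hh : h ∈ ann W) : g.comp W.subtypeL = f.comp W.subtypeL := by
  ext w
  simp [hfgh, hh w w.2]

theorem sub_mem_ann_of_comp_subtypeL_eq {W : Submodule ℝ V} {f g : V →L[ℝ] ℝ}
    (hfg : g.comp W.subtypeL = f.comp W.subtypeL) : f - g ∈ ann W := fun w hw => by
  have hw' := congr($hfg ⟨w, hw⟩)
  simp only [ContinuousLinearMap.comp_apply, Submodule.subtypeL_apply] at hw'
  simp [hw']

end Functionals

section Sharp

variable {X : Type*} [AddCommGroup X] [Module ℝ X] [TopologicalSpace X]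
  {ι : Type*} {p : SeminormFamily ℝ X ι} {Y : Submodule ℝ X}

theorem neg_mem_sharpLcs {f : X →L[ℝ] ℝ} (hf : f ∈ sharpLcs p Y) : -f ∈ sharpLcs p Y := by
  obtain ⟨i, hi⟩ := Set.mem_iUnion.mp hf
  refine Set.mem_iUnion.mpr ⟨i, fun j hij => ?_⟩
  rw [chi_neg, ContinuousLinearMap.neg_comp, chiSub, chi_neg]
  exact hi j hij

theorem isHBE_of_mem_sharpMu {f : X →L[ℝ] ℝ} {i j : ι} (hf : f ∈ sharpMu p Y i)
    (hij : p i ≤ p j) : IsHBE Y (p j) (f.comp Y.subtypeL) f :=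
  ⟨rfl, (hf j hij).1⟩

theorem mem_sharpMu_of_forall_isHBE {f : Y →L[ℝ] ℝ} {ft : X →L[ℝ] ℝ} {i : ι}
    (hfin : chiSub Y (p i) f < ⊤) (hHBE : ∀ j, p i ≤ p j → IsHBE Y (p j) f ft) :
    ft ∈ sharpMu p Y i := by
  intro j hij
  obtain ⟨hrestrict, hchi⟩ := hHBE j hij
  rw [hrestrict]
  exact ⟨hchi, hchi ▸ (chiSub_antitone Y hij f).trans_lt hfin⟩

theorem uniqueDecomposition_of_snp (hdir : Directed (· ≤ ·) p) (hSNP : SNP (fun i => ⇑(p i)) Y)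
    (f : X →L[ℝ] ℝ) : UniqueDecomposition (sharpLcs p Y) (ann Y) f := by
  obtain ⟨i, hfin, ft, hft⟩ := hSNP (f.comp Y.subtypeL)
  have hrestrict : ft.comp Y.subtypeL = f.comp Y.subtypeL := (hft i fun _ => le_rfl).1.1
  have hft_mem : ft ∈ sharpMu p Y i := mem_sharpMu_of_forall_isHBE hfin fun j hij => (hft j hij).1
  refine ⟨ft, Set.mem_iUnion.mpr ⟨i, hft_mem⟩, f - ft, sub_mem_ann_of_comp_subtypeL_eq hrestrict, (add_sub_cancel ft f).symm, ?_⟩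
  rintro g ⟨-, ⟨j, rfl⟩, hg⟩ h hh rfl
  obtain ⟨k, hik, hjk⟩ := hdir i j
  have hHBE := isHBE_of_mem_sharpMu hg hjk
  rw [comp_subtypeL_eq_of_eq_add_of_mem_ann rfl hh] at hHBE
  obtain rfl : g = ft := (hft k hik).2 g hHBE
  exact ⟨rfl, (add_sub_cancel_left g h).symm⟩

end Sharp

theorem statement15_general {X : Type*} [AddCommGroup X] [Module ℝ X] [TopologicalSpace X]
    {ι : Type*} (p : SeminormFamily ℝ X ι)
    (hdir : Directed (· ≤ ·) p) (Y : Submodule ℝ X) :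
    (SNP (fun i => ⇑(p i)) Y →
      ∀ f : X →L[ℝ] ℝ, ∃ g ∈ sharpLcs p Y, ∃ h ∈ ann Y, f = g + h ∧
        ∀ g' ∈ sharpLcs p Y, ∀ h' ∈ ann Y, f = g' + h' → g' = g ∧ h' = h) ∧
    ((∀ f : X →L[ℝ] ℝ, ∃ g ∈ sharpLcs p Y, ∃ h ∈ ann Y, f = g + h ∧
        ∀ g' ∈ sharpLcs p Y, ∀ h' ∈ ann Y, f = g' + h' → g' = g ∧ h' = h) →
      ∀ f₁ ∈ sharpLcs p Y, ∀ f₂ ∈ sharpLcs p Y, f₁ + f₂ ∈ ann Y → f₁ + f₂ = 0) :=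
  ⟨fun hSNP => uniqueDecomposition_of_snp hdir hSNP,
    fun hdec _ hf₁ _ hf₂ => add_eq_zero_of_uniqueDecomposition (zero_mem_ann Y)
      (fun _ => neg_mem_sharpLcs) (hdec _) hf₁ hf₂⟩

theorem statement15 {X : Type*} [AddCommGroup X] [Module ℝ X] [TopologicalSpace X]
    {ι : Type*} [Nonempty ι] (p : SeminormFamily ℝ X ι) (hp : WithSeminorms p)
    (hdir : Directed (· ≤ ·) p) (Y : Submodule ℝ X) :
    (SNP (fun i => ⇑(p i)) Y →
      ∀ f : X →L[ℝ] ℝ, ∃ g ∈ sharpLcs p Y, ∃ h ∈ ann Y, f = g + h ∧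
        ∀ g' ∈ sharpLcs p Y, ∀ h' ∈ ann Y, f = g' + h' → g' = g ∧ h' = h) ∧
    ((∀ f : X →L[ℝ] ℝ, ∃ g ∈ sharpLcs p Y, ∃ h ∈ ann Y, f = g + h ∧
        ∀ g' ∈ sharpLcs p Y, ∀ h' ∈ ann Y, f = g' + h' → g' = g ∧ h' = h) →
      ∀ f₁ ∈ sharpLcs p Y, ∀ f₂ ∈ sharpLcs p Y, f₁ + f₂ ∈ ann Y → f₁ + f₂ = 0) :=
  statement15_general p hdir Y
end
end
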